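/- arXiv:1809.09461 — 6 statements merged into one kernel-verified Lean document; each statement's English description precedes it below -/
import Mathlib

section
/- The quotient of $W_n$ by its Frattini subgroup is isomorphic to $(\mathbb{Z}/2\mathbb{Z})^n$. -/
/-- Leaves of the complete binary rooted tree of height `n`, recorded as the
big-endian bit string of the (0-indexed) leaf label. -/
abbrev Leaf (n : ℕ) := Fin n → Bool

/-- The function underlying the standard generator `a k` of `Aut(T_n)`:
it flips coordinate `n - k` of a leaf lying on the leftmost spine above level `n - k`
(this is the permutation `(1, 2^(k-1)+1)(2, 2^(k-1)+2) ⋯ (2^(k-1), 2^k)` of the leaves). -/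
def aFun (n k : ℕ) (ℓ : Leaf n) : Leaf n := fun t =>
  if (t : ℕ) = n - k ∧ (∀ s : Fin n, (s : ℕ) < n - k → ℓ s = false) then !(ℓ t) else ℓ t

lemma aFun_apply (n k : ℕ) (ℓ : Leaf n) (t : Fin n) :
    aFun n k ℓ t =
      if (t : ℕ) = n - k ∧ (∀ s : Fin n, (s : ℕ) < n - k → ℓ s = false) then !(ℓ t) else ℓ t :=
  rfl

lemma aFun_spine (n k : ℕ) (ℓ : Leaf n) (s : Fin n) (hs : (s : ℕ) < n - k) :
    aFun n k ℓ s = ℓ s := by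
  rw [aFun_apply, if_neg]
  rintro ⟨h1, -⟩
  omega

lemma aFun_cond (n k : ℕ) (ℓ : Leaf n) (t : Fin n) :
    ((t : ℕ) = n - k ∧ (∀ s : Fin n, (s : ℕ) < n - k → aFun n k ℓ s = false)) ↔
    ((t : ℕ) = n - k ∧ (∀ s : Fin n, (s : ℕ) < n - k → ℓ s = false)) := by
  constructor
  · rintro ⟨h1, h2⟩
    refine ⟨h1, fun s hs => ?_⟩
    have h := h2 s hs
    rwa [aFun_spine n k ℓ s hs] at h
  · rintro ⟨h1, h2⟩
    refine ⟨h1, fun s hs => ?_⟩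
    rw [aFun_spine n k ℓ s hs]
    exact h2 s hs

lemma aFun_involutive (n k : ℕ) : Function.Involutive (aFun n k) := by
  intro ℓ
  funext t
  rw [show aFun n k (aFun n k ℓ) t =
    (if (t : ℕ) = n - k ∧ (∀ s : Fin n, (s : ℕ) < n - k → aFun n k ℓ s = false)
      then !(aFun n k ℓ t) else aFun n k ℓ t) from rfl]
  by_cases h : (t : ℕ) = n - k ∧ (∀ s : Fin n, (s : ℕ) < n - k → ℓ s = false)
  · rw [if_pos ((aFun_cond n k ℓ t).mpr h), aFun_apply, if_pos h, Bool.not_not]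
  · rw [if_neg (fun hc => h ((aFun_cond n k ℓ t).mp hc)), aFun_apply, if_neg h]

/-- The standard generator `a_k` of `Aut(T_n)` (as a permutation of the leaves). -/
def aPerm (n k : ℕ) : Equiv.Perm (Leaf n) :=
  Function.Involutive.toPerm (aFun n k) (aFun_involutive n k)

lemma aPerm_apply (n k : ℕ) (ℓ : Leaf n) : aPerm n k ℓ = aFun n k ℓ := rfl

/-- The automorphism group `W_n` of the complete binary rooted tree of height `n`,
realized as the subgroup of permutations of the `2^n` leaves which, at every level `m`,
map leaves agreeing in their first `m` coordinates to leaves agreeing in their first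
`m` coordinates. -/
def treeGroup (n : ℕ) : Subgroup (Equiv.Perm (Leaf n)) where
  carrier := {σ | ∀ m : ℕ, ∀ i j : Leaf n,
    (∀ t : Fin n, (t : ℕ) < m → σ i t = σ j t) ↔ (∀ t : Fin n, (t : ℕ) < m → i t = j t)}
  one_mem' := by intro m i j; simp
  mul_mem' := by
    intro a b ha hb m i j
    simpa [Equiv.Perm.mul_apply] using (ha m (b i) (b j)).trans (hb m i j)
  inv_mem' := by
    intro a ha m i j
    simpa using (ha m (a⁻¹ i) (a⁻¹ j)).symm

lemma mem_treeGroup (n : ℕ) (σ : Equiv.Perm (Leaf n)) :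
    σ ∈ treeGroup n ↔ ∀ m : ℕ, ∀ i j : Leaf n,
      (∀ t : Fin n, (t : ℕ) < m → σ i t = σ j t) ↔ (∀ t : Fin n, (t : ℕ) < m → i t = j t) :=
  Iff.rfl

lemma aPerm_mem (n k : ℕ) : aPerm n k ∈ treeGroup n := by
  have D : ∀ (i j : Leaf n) (m : ℕ), (∀ t : Fin n, (t : ℕ) < m → i t = j t) →
      (∀ t : Fin n, (t : ℕ) < m → aFun n k i t = aFun n k j t) := by
    intro i j m hij t ht
    rw [aFun_apply, aFun_apply]
    by_cases h1 : (t : ℕ) = n - k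
    · have hsp : (∀ s : Fin n, (s : ℕ) < n - k → i s = false) ↔
          (∀ s : Fin n, (s : ℕ) < n - k → j s = false) := by
        constructor
        · intro h s hs
          rw [← hij s (by omega)]; exact h s hs
        · intro h s hs
          rw [hij s (by omega)]; exact h s hs
      by_cases h2 : ∀ s : Fin n, (s : ℕ) < n - k → i s = false
      · rw [if_pos ⟨h1, h2⟩, if_pos ⟨h1, hsp.mp h2⟩, hij t ht]
      · rw [if_neg (fun hc => h2 hc.2), if_neg (fun hc => h2 (hsp.mpr hc.2)), hij t ht]
    · rw [if_neg (fun hc => h1 hc.1), if_neg (fun hc => h1 hc.1), hij t ht]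
  rw [mem_treeGroup]
  intro m i j
  constructor
  · intro h t ht
    have h2 := D (aPerm n k i) (aPerm n k j) m (fun t ht => by
      simpa [aPerm_apply] using h t ht) t ht
    rwa [show aFun n k (aPerm n k i) = i from aFun_involutive n k i,
      show aFun n k (aPerm n k j) = j from aFun_involutive n k j] at h2
  · intro h t ht
    simpa [aPerm_apply] using D i j m h t ht

/-- The standard generator `a_k` as an element of `W_n`. -/
def aEl (n k : ℕ) : ↥(treeGroup n) := ⟨aPerm n k, aPerm_mem n k⟩

/-- The standard `k`-odometer `x_k = a_1 a_2 ⋯ a_k`, viewed inside `W_n`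
(via the natural inclusion of `W_k` acting on the left part of the tree). -/
def xEl (n k : ℕ) : ↥(treeGroup n) :=
  (((List.range k).map fun j => aEl n (j + 1))).prod

/-- `v_i = x_{i+2}^2`, viewed inside `W_n`. -/
def vEl (n i : ℕ) : ↥(treeGroup n) := (xEl n (i + 2)) ^ 2

/-- `m_n = a_{n-1} (x_{n-2})^{x_n}` (with `g^h = h g h⁻¹`), viewed inside `W_n`. -/
def mEl (n : ℕ) : ↥(treeGroup n) :=
  aEl n (n - 1) * (xEl n n * xEl n (n - 2) * (xEl n n)⁻¹)

/-- A permutation of the leaves of `T_n` is an `n`-odometer if it acts transitively on them. -/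
def IsOdometer (n : ℕ) (σ : Equiv.Perm (Leaf n)) : Prop :=
  ∀ i j : Leaf n, ∃ t : ℕ, (σ ^ t) i = j

/-- The generating set `{v_i : i ≤ k - 3}` of `V_k`, inside `W_n`. -/
def VsetK (n k : ℕ) : Set ↥(treeGroup n) := {g | ∃ i : ℕ, i + 3 ≤ k ∧ g = vEl n i}

/-- The subgroup `V_k = ⟨v_{k-3}, …, v_0⟩ ≤ W_n`. -/
def VgrpK (n k : ℕ) : Subgroup ↥(treeGroup n) := Subgroup.closure (VsetK n k)

/-- The group `M_k = ⟨x_k, v_{k-3}, …, v_0⟩` of Section 4, inside `W_n`. -/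
def MgrpK (n k : ℕ) : Subgroup ↥(treeGroup n) :=
  Subgroup.closure (insert (xEl n k) (VsetK n k))

/-- The normal closure `N_k = V_k^{M_k}` of `V_k` in `M_k`, inside `W_n`. -/
def NgrpK (n k : ℕ) : Subgroup ↥(treeGroup n) :=
  Subgroup.closure {g | ∃ m ∈ MgrpK n k, ∃ v ∈ VsetK n k, g = m * v * m⁻¹}

/-- The group `M_n = ⟨x_n, m_n, v_{n-3}, …, v_0⟩` of Section 5. -/
def MgrpB (n : ℕ) : Subgroup ↥(treeGroup n) :=
  Subgroup.closure (insert (xEl n n) (insert (mEl n) (VsetK n n)))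

/-- The normal closure `N_n = ⟨m_n, v_{n-3}, …, v_0⟩^{M_n}` of Section 5. -/
def NgrpB (n : ℕ) : Subgroup ↥(treeGroup n) :=
  Subgroup.closure {g | ∃ m ∈ MgrpB n, ∃ h ∈ insert (mEl n) (VsetK n n), g = m * h * m⁻¹}

/-- `U_n = V_n^{⟨x_n⟩}`. -/
def Ugrp (n : ℕ) : Subgroup ↥(treeGroup n) :=
  Subgroup.closure {g | ∃ m ∈ Subgroup.closure {xEl n n}, ∃ v ∈ VsetK n n, g = m * v * m⁻¹}


/-!
The level parities (the number, mod 2, of vertices of each level at which the portrait of an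
automorphism has label `1`) form a surjective homomorphism `W_n → (ℤ/2)^n`. Its kernel is the
Frattini subgroup: `W_n` is a `2`-group, so its maximal subgroups are exactly the kernels of the
homomorphisms onto `ℤ/2`, and each of these factors through the level parities, because `W_n` is
generated by the swaps of the two subtrees below a single vertex and two such swaps at the same
level are conjugate.
-/

lemma Bool.ite_xor_eq_add (a b : Bool) :
    (if xor a b then (1 : ZMod 2) else 0) = (if a then 1 else 0) + (if b then 1 else 0) := by
  cases a <;> cases b <;> decide

section Frattini

variable {G : Type*} [Group G] {p : ℕ} [hp : Fact p.Prime]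

theorem MonoidHom.isCoatom_ker_of_surjective (χ : G →* Multiplicative (ZMod p))
    (hχ : Function.Surjective χ) : IsCoatom χ.ker := by
  have : IsSimpleGroup (Multiplicative (ZMod p)) := isSimpleGroup_of_prime_card (p := p) (by simp)
  rw [← MonoidHom.comap_bot]
  exact Subgroup.isCoatom_comap_of_surjective hχ isCoatom_bot

theorem IsPGroup.card_quotient_of_isCoatom [Finite G] (hG : IsPGroup p G) {M : Subgroup G}
    [M.Normal] (hM : IsCoatom M) : Nat.card (G ⧸ M) = p := by
  have : IsSimpleOrder (Set.Ici M) := Set.isSimpleOrder_Ici_iff_isCoatom.mpr hM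
  have : IsSimpleOrder (Subgroup (G ⧸ M)) :=
    OrderIso.isSimpleOrder (β := Set.Ici M) (QuotientGroup.comapMk'OrderIso M)
  have : Nontrivial (G ⧸ M) := Subgroup.nontrivial_iff.mp inferInstance
  have : IsSimpleGroup (G ⧸ M) := ⟨fun H _ => eq_bot_or_eq_top H⟩
  have := (hG.to_quotient M).isNilpotent
  have hprime : (Nat.card (G ⧸ M)).Prime := IsSimpleGroup.prime_card
  exact ((Nat.prime_dvd_prime_iff_eq hp.out hprime).mp
    ((hG.to_quotient M).card_eq_or_dvd.resolve_left hprime.one_lt.ne')).symm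

theorem IsPGroup.exists_ker_eq_of_isCoatom [Finite G] (hG : IsPGroup p G) {M : Subgroup G}
    (hM : IsCoatom M) : ∃ χ : G →* Multiplicative (ZMod p), χ.ker = M := by
  have := hG.isNilpotent
  have := Subgroup.NormalizerCondition.normal_of_coatom M
    Group.normalizerCondition_of_isNilpotent hM
  let e := mulEquivOfPrimeCardEq (hG.card_quotient_of_isCoatom hM)
    (by simp : Nat.card (Multiplicative (ZMod p)) = p)
  refine ⟨e.toMonoidHom.comp (QuotientGroup.mk' M), ?_⟩
  rw [MonoidHom.ker_comp_of_injective _ _ e.injective, QuotientGroup.ker_mk']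

theorem IsPGroup.ker_eq_frattini [Finite G] (hG : IsPGroup p G) {ι : Type*}
    (φ : G →* Multiplicative (ι → ZMod p)) (hφ : Function.Surjective φ)
    (hφχ : ∀ χ : G →* Multiplicative (ZMod p), φ.ker ≤ χ.ker) : φ.ker = frattini G := by
  refine le_antisymm ?_ fun g hg => ?_
  · refine le_iInf₂ fun M hM => ?_
    obtain ⟨χ, rfl⟩ := hG.exists_ker_eq_of_isCoatom hM
    exact hφχ χ
  · refine funext fun i => ?_
    let φᵢ := (AddMonoidHom.toMultiplicative (Pi.evalAddMonoidHom (fun _ => ZMod p) i)).comp φ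
    have hφᵢ : Function.Surjective φᵢ := (Function.surjective_eval i).comp hφ
    exact frattini_le_coatom (φᵢ.isCoatom_ker_of_surjective hφᵢ) hg

theorem MonoidHom.surjective_of_ofAdd_single_mem_range {ι : Type*} [Fintype ι] [DecidableEq ι]
    (φ : G →* Multiplicative (ι → ZMod p))
    (hφ : ∀ i, Multiplicative.ofAdd (Pi.single i 1) ∈ φ.range) : Function.Surjective φ := by
  intro x
  have hx : x = ∏ i, Multiplicative.ofAdd (Pi.single i (1 : ZMod p)) ^ (x.toAdd i).val := by
    refine Multiplicative.toAdd.injective (funext fun j => ?_)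
    simp only [toAdd_prod, toAdd_pow, toAdd_ofAdd, Finset.sum_apply, Pi.smul_apply,
      Pi.single_apply]
    simp
  exact MonoidHom.mem_range.mp (hx ▸ Subgroup.prod_mem _ fun i _ => pow_mem (hφ i) _)

end Frattini

namespace treeGroup

open Finset

variable {n : ℕ}

/-- The leftmost leaf below the level-`m` ancestor of `ℓ`. The vertices of level `m` are encoded
as the leaves fixed by `truncate m`. -/
def truncate (m : ℕ) (ℓ : Leaf n) : Leaf n := fun t => if (t : ℕ) < m then ℓ t else false

lemma truncate_apply_of_lt {m : ℕ} {t : Fin n} (ℓ : Leaf n) (h : (t : ℕ) < m) :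
    truncate m ℓ t = ℓ t := if_pos h

lemma truncate_apply_of_le {m : ℕ} {t : Fin n} (ℓ : Leaf n) (h : m ≤ t) :
    truncate m ℓ t = false := if_neg (Nat.not_lt.mpr h)

lemma truncate_eq_truncate_iff {m : ℕ} {ℓ ℓ' : Leaf n} :
    truncate m ℓ = truncate m ℓ' ↔ ∀ t : Fin n, (t : ℕ) < m → ℓ t = ℓ' t := by
  simp only [funext_iff, truncate]
  refine ⟨fun h t ht => by simpa [ht] using h t, fun h t => ?_⟩
  split_ifs with ht
  exacts [h t ht, rfl]

lemma truncate_truncate_of_le {k m : ℕ} (h : k ≤ m) (ℓ : Leaf n) :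
    truncate k (truncate m ℓ) = truncate k ℓ :=
  truncate_eq_truncate_iff.mpr fun _ ht => truncate_apply_of_lt ℓ (ht.trans_le h)

lemma truncate_succ_eq_truncate_succ_iff {t : Fin n} {ℓ ℓ' : Leaf n} :
    truncate (t + 1) ℓ = truncate (t + 1) ℓ' ↔
      truncate t ℓ = truncate t ℓ' ∧ ℓ t = ℓ' t := by
  simp only [truncate_eq_truncate_iff, Nat.lt_succ_iff_lt_or_eq, or_imp, forall_and]
  exact and_congr_right' ⟨fun h => h t rfl, fun h s hs => Fin.ext hs ▸ h⟩

lemma mem_treeGroup_iff_truncate {σ : Equiv.Perm (Leaf n)} :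
    σ ∈ treeGroup n ↔ ∀ (m : ℕ) (ℓ ℓ' : Leaf n),
      truncate m (σ ℓ) = truncate m (σ ℓ') ↔ truncate m ℓ = truncate m ℓ' := by
  simp only [mem_treeGroup, truncate_eq_truncate_iff]

lemma mem_treeGroup_of_involutive {f : Leaf n → Leaf n} (hf : Function.Involutive f)
    (hf' : ∀ (m : ℕ) (ℓ ℓ' : Leaf n), truncate m ℓ = truncate m ℓ' →
      truncate m (f ℓ) = truncate m (f ℓ')) :
    hf.toPerm f ∈ treeGroup n :=
  mem_treeGroup_iff_truncate.mpr fun m ℓ ℓ' =>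
    ⟨fun h => by simpa only [Function.Involutive.coe_toPerm, hf ℓ, hf ℓ'] using hf' m _ _ h,
      hf' m ℓ ℓ'⟩

section Portrait

variable {σ : Equiv.Perm (Leaf n)}

lemma truncate_apply_truncate (hσ : σ ∈ treeGroup n) (m : ℕ) (ℓ : Leaf n) :
    truncate m (σ (truncate m ℓ)) = truncate m (σ ℓ) :=
  (mem_treeGroup_iff_truncate.mp hσ m _ _).mpr (truncate_truncate_of_le le_rfl ℓ)

/-- The bit `σ (truncate t ℓ) t` is the label at the level-`t` ancestor of `ℓ` of the portrait
of `σ`: whether `σ` exchanges the two subtrees below that vertex. -/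
lemma apply_eq_xor (hσ : σ ∈ treeGroup n) (t : Fin n) (ℓ : Leaf n) :
    σ ℓ t = xor (ℓ t) (σ (truncate t ℓ) t) := by
  have h := mem_treeGroup_iff_truncate.mp hσ (t + 1) ℓ (truncate t ℓ)
  simp only [truncate_succ_eq_truncate_succ_iff, truncate_apply_truncate hσ,
    truncate_truncate_of_le le_rfl, truncate_apply_of_le ℓ le_rfl, true_and] at h
  revert h
  cases σ ℓ t <;> cases σ (truncate t ℓ) t <;> cases ℓ t <;> simp

lemma pow_two_pow_apply_of_lt (hσ : σ ∈ treeGroup n) (m : ℕ) (ℓ : Leaf n) (t : Fin n)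
    (ht : (t : ℕ) < m) : (σ ^ 2 ^ m) ℓ t = ℓ t := by
  induction m generalizing ℓ t with
  | zero => omega
  | succ m ih =>
    set τ := σ ^ 2 ^ m
    have hτ : σ ^ 2 ^ (m + 1) = τ * τ := by rw [pow_succ, pow_mul, sq]
    rw [hτ, Equiv.Perm.mul_apply]
    rcases Nat.lt_succ_iff_lt_or_eq.mp ht with ht | ht
    · rw [ih _ _ ht, ih _ _ ht]
    · have htrunc : truncate t (τ ℓ) = truncate t ℓ :=
        truncate_eq_truncate_iff.mpr fun s hs => ih ℓ s (ht ▸ hs)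
      have hτmem : τ ∈ treeGroup n := pow_mem hσ _
      rw [apply_eq_xor hτmem t (τ ℓ), htrunc, apply_eq_xor hτmem t ℓ, Bool.xor_assoc,
        Bool.xor_self, Bool.xor_false]

end Portrait

lemma pow_two_pow_eq_one (g : treeGroup n) : g ^ 2 ^ n = 1 :=
  Subtype.ext <| Equiv.ext fun ℓ => funext fun t => by
    simpa using pow_two_pow_apply_of_lt g.2 n ℓ t t.isLt

lemma isPGroup : IsPGroup 2 (treeGroup n) := fun g => ⟨n, pow_two_pow_eq_one g⟩

def levelVertices (m : ℕ) : Finset (Leaf n) := {v | truncate m v = v}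

lemma truncate_mem_levelVertices (m : ℕ) (ℓ : Leaf n) : truncate m ℓ ∈ levelVertices m := by
  simp [levelVertices, truncate_truncate_of_le le_rfl]

def leftmost : Leaf n := fun _ => false

lemma leftmost_mem_levelVertices (m : ℕ) : (leftmost : Leaf n) ∈ levelVertices m := by
  simp [levelVertices, funext_iff, truncate, leftmost]

lemma apply_self_eq_false_of_mem_levelVertices {m : Fin n} {v : Leaf n}
    (hv : v ∈ levelVertices m) : v m = false := by
  rw [levelVertices, mem_filter] at hv
  rw [← hv.2, truncate_apply_of_le v le_rfl]

def levelParity (m : Fin n) (σ : Equiv.Perm (Leaf n)) : ZMod 2 :=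
  ∑ v ∈ levelVertices m, if σ v m then 1 else 0

lemma levelParity_mul {σ τ : Equiv.Perm (Leaf n)} (hσ : σ ∈ treeGroup n)
    (hτ : τ ∈ treeGroup n) (m : Fin n) :
    levelParity m (σ * τ) = levelParity m σ + levelParity m τ := by
  have hτ' : τ⁻¹ ∈ treeGroup n := inv_mem hτ
  have hreindex :
      ∑ v ∈ levelVertices m, (if σ (truncate m (τ v)) m then (1 : ZMod 2) else 0) =
        levelParity m σ := by
    refine sum_nbij' (fun v => truncate m (τ v)) (fun w => truncate m (τ⁻¹ w))
      (fun _ _ => truncate_mem_levelVertices _ _) (fun _ _ => truncate_mem_levelVertices _ _)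
      (fun v hv => ?_) (fun w hw => ?_) fun _ _ => rfl
    · rw [truncate_apply_truncate hτ', Equiv.Perm.inv_def, Equiv.symm_apply_apply,
        (mem_filter.mp hv).2]
    · rw [truncate_apply_truncate hτ, Equiv.Perm.inv_def, Equiv.apply_symm_apply,
        (mem_filter.mp hw).2]
  rw [levelParity, ← hreindex, add_comm, levelParity, ← sum_add_distrib]
  refine sum_congr rfl fun v _ => ?_
  rw [Equiv.Perm.mul_apply, apply_eq_xor hσ, Bool.ite_xor_eq_add]

def levelParityHom (n : ℕ) : treeGroup n →* Multiplicative (Fin n → ZMod 2) :=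
  MonoidHom.mk' (fun σ => Multiplicative.ofAdd fun m => levelParity m σ) fun σ τ =>
    congrArg Multiplicative.ofAdd (funext fun m => levelParity_mul σ.2 τ.2 m)

/-- Exchanges the two subtrees below every level-`m` vertex in `F`. -/
def levelFlipFun (m : Fin n) (F : Finset (Leaf n)) (ℓ : Leaf n) : Leaf n :=
  Function.update ℓ m (xor (ℓ m) (decide (truncate m ℓ ∈ F)))

section LevelFlip

variable {m : Fin n} {F : Finset (Leaf n)}

lemma levelFlipFun_apply_of_ne {t : Fin n} (ℓ : Leaf n) (h : t ≠ m) :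
    levelFlipFun m F ℓ t = ℓ t :=
  Function.update_of_ne h _ _

lemma levelFlipFun_apply_self (ℓ : Leaf n) :
    levelFlipFun m F ℓ m = xor (ℓ m) (decide (truncate m ℓ ∈ F)) :=
  Function.update_self _ _ _

lemma truncate_levelFlipFun (ℓ : Leaf n) : truncate m (levelFlipFun m F ℓ) = truncate m ℓ :=
  truncate_eq_truncate_iff.mpr fun _ ht => levelFlipFun_apply_of_ne ℓ (Fin.ne_of_lt ht)

lemma levelFlipFun_involutive (m : Fin n) (F : Finset (Leaf n)) :
    Function.Involutive (levelFlipFun m F) := fun ℓ =>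
  funext fun t => by
    rcases eq_or_ne t m with rfl | h
    · simp [levelFlipFun_apply_self, truncate_levelFlipFun]
    · simp [levelFlipFun_apply_of_ne _ h]

lemma truncate_levelFlipFun_congr {k : ℕ} {ℓ ℓ' : Leaf n}
    (h : truncate k ℓ = truncate k ℓ') :
    truncate k (levelFlipFun m F ℓ) = truncate k (levelFlipFun m F ℓ') := by
  refine truncate_eq_truncate_iff.mpr fun t ht => ?_
  have hagree := truncate_eq_truncate_iff.mp h
  rcases eq_or_ne t m with rfl | hne
  · have hm : truncate t ℓ = truncate t ℓ' :=
      truncate_eq_truncate_iff.mpr fun s hs => hagree s (hs.trans ht)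
    rw [levelFlipFun_apply_self, levelFlipFun_apply_self, hm, hagree t ht]
  · rw [levelFlipFun_apply_of_ne ℓ hne, levelFlipFun_apply_of_ne ℓ' hne, hagree t ht]

end LevelFlip

def levelFlip (m : Fin n) (F : Finset (Leaf n)) : treeGroup n :=
  ⟨(levelFlipFun_involutive m F).toPerm _,
    mem_treeGroup_of_involutive (levelFlipFun_involutive m F) fun _ _ _ =>
      truncate_levelFlipFun_congr⟩

lemma levelFlip_apply (m : Fin n) (F : Finset (Leaf n)) (ℓ : Leaf n) :
    (levelFlip m F : Equiv.Perm (Leaf n)) ℓ = levelFlipFun m F ℓ := rfl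

lemma levelFlip_mul_self (m : Fin n) (F : Finset (Leaf n)) :
    levelFlip m F * levelFlip m F = 1 :=
  Subtype.ext <| Equiv.ext (levelFlipFun_involutive m F)

lemma levelFlip_empty (m : Fin n) : levelFlip m ∅ = 1 :=
  Subtype.ext <| Equiv.ext fun ℓ => by
    simp [levelFlip_apply, levelFlipFun]

lemma levelFlip_insert (m : Fin n) {a : Leaf n} {F : Finset (Leaf n)} (ha : a ∉ F) :
    levelFlip m (insert a F) = levelFlip m {a} * levelFlip m F := by
  refine Subtype.ext <| Equiv.ext fun ℓ => funext fun t => ?_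
  simp only [Subgroup.coe_mul, Equiv.Perm.mul_apply, levelFlip_apply]
  rcases eq_or_ne t m with rfl | h
  · rw [levelFlipFun_apply_self, levelFlipFun_apply_self, levelFlipFun_apply_self,
      truncate_levelFlipFun]
    by_cases hℓ : truncate t ℓ = a
    · subst hℓ; simp [ha]
    · simp [hℓ]
  · simp only [levelFlipFun_apply_of_ne _ h]

def translateFun (u ℓ : Leaf n) : Leaf n := fun t => xor (ℓ t) (u t)

lemma translateFun_involutive (u : Leaf n) : Function.Involutive (translateFun u) := fun ℓ =>
  funext fun t => by simp [translateFun]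

lemma truncate_translateFun_congr (u : Leaf n) {k : ℕ} {ℓ ℓ' : Leaf n}
    (h : truncate k ℓ = truncate k ℓ') :
    truncate k (translateFun u ℓ) = truncate k (translateFun u ℓ') :=
  truncate_eq_truncate_iff.mpr fun t ht => by
    simp only [translateFun, truncate_eq_truncate_iff.mp h t ht]

def translate (u : Leaf n) : treeGroup n :=
  ⟨(translateFun_involutive u).toPerm _, mem_treeGroup_of_involutive (translateFun_involutive u)
    fun _ _ _ => truncate_translateFun_congr u⟩

lemma translate_mul_self (u : Leaf n) : translate u * translate u = 1 :=
  Subtype.ext <| Equiv.ext (translateFun_involutive u)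

lemma translate_mul_levelFlip_mul_translate {m : Fin n} {v : Leaf n}
    (hv : v ∈ levelVertices m) :
    translate v * levelFlip m {leftmost} * translate v = levelFlip m {v} := by
  refine Subtype.ext <| Equiv.ext fun ℓ => funext fun t => ?_
  simp only [Subgroup.coe_mul, Equiv.Perm.mul_apply, levelFlip_apply]
  change xor (levelFlipFun m _ (translateFun v ℓ) t) (v t) = _
  rcases eq_or_ne t m with rfl | h
  · have hroot : truncate t (translateFun v ℓ) = leftmost ↔ truncate t ℓ = v := by
      conv_rhs => rw [← (mem_filter.mp hv).2, truncate_eq_truncate_iff]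
      simp [funext_iff, truncate, translateFun, leftmost]
    simp [levelFlipFun_apply_self, hroot, translateFun,
      apply_self_eq_false_of_mem_levelVertices hv]
  · simp [levelFlipFun_apply_of_ne _ h, translateFun]

lemma levelParityHom_levelFlip {m : Fin n} {v : Leaf n} (hv : v ∈ levelVertices m) :
    levelParityHom n (levelFlip m {v}) = Multiplicative.ofAdd (Pi.single m 1) := by
  refine congrArg Multiplicative.ofAdd (funext fun k => ?_)
  rw [levelParity, Pi.single_apply]
  split_ifs with hk
  · subst hk
    calc ∑ w ∈ levelVertices k, _
        = ∑ w ∈ levelVertices k, if w = v then (1 : ZMod 2) else 0 :=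
          sum_congr rfl fun w hw => by
            simp [levelFlip_apply, levelFlipFun_apply_self,
              apply_self_eq_false_of_mem_levelVertices hw, (mem_filter.mp hw).2]
      _ = 1 := by rw [sum_ite_eq', if_pos hv]
  · refine sum_eq_zero fun w hw => ?_
    simp [levelFlip_apply, levelFlipFun_apply_of_ne w hk,
      apply_self_eq_false_of_mem_levelVertices hw]

def swaps (n : ℕ) : Set (treeGroup n) :=
  {g | ∃ (m : Fin n), ∃ v ∈ levelVertices m, levelFlip m {v} = g}

lemma levelFlip_mem_closure_swaps {m : Fin n} {F : Finset (Leaf n)}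
    (hF : F ⊆ levelVertices m) : levelFlip m F ∈ Subgroup.closure (swaps n) := by
  induction F using Finset.induction_on with
  | empty => rw [levelFlip_empty]; exact one_mem _
  | insert a F haF ih =>
    rw [insert_subset_iff] at hF
    rw [levelFlip_insert m haF]
    exact mul_mem (Subgroup.subset_closure ⟨m, a, hF.1, rfl⟩) (ih hF.2)

lemma truncate_succ_levelFlip_apply {σ : Equiv.Perm (Leaf n)} (hσ : σ ∈ treeGroup n)
    {m : Fin n} (hfix : ∀ ℓ, truncate m (σ ℓ) = truncate m ℓ) (ℓ : Leaf n) :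
    truncate (m + 1) (levelFlipFun m {v ∈ levelVertices m | σ v m} (σ ℓ)) =
      truncate (m + 1) ℓ := by
  rw [truncate_succ_eq_truncate_succ_iff, truncate_levelFlipFun, hfix, levelFlipFun_apply_self,
    hfix, apply_eq_xor hσ m ℓ]
  simp [truncate_mem_levelVertices]

lemma mem_closure_swaps_of_truncate_apply_eq {k : ℕ} (hk : k ≤ n) (g : treeGroup n)
    (hg : ∀ ℓ, truncate k ((g : Equiv.Perm (Leaf n)) ℓ) = truncate k ℓ) :
    g ∈ Subgroup.closure (swaps n) := by
  refine Nat.decreasingInduction (motive := fun k _ => ∀ g : treeGroup n,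
    (∀ ℓ, truncate k ((g : Equiv.Perm (Leaf n)) ℓ) = truncate k ℓ) →
      g ∈ Subgroup.closure (swaps n)) (fun k hk ih g hg => ?_) (fun g hg => ?_) hk g hg
  · let m : Fin n := ⟨k, hk⟩
    let F := {v ∈ levelVertices m | (g : Equiv.Perm (Leaf n)) v m}
    rw [← one_mul g, ← levelFlip_mul_self m F, mul_assoc]
    exact mul_mem (levelFlip_mem_closure_swaps (filter_subset _ _))
      (ih _ (truncate_succ_levelFlip_apply (m := m) g.2 hg))
  · have hn : ∀ ℓ : Leaf n, truncate n ℓ = ℓ := fun ℓ =>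
      funext fun t => truncate_apply_of_lt ℓ t.2
    have : g = 1 := Subtype.ext <| Equiv.ext fun ℓ => by simpa [hn] using hg ℓ
    exact this ▸ one_mem _

lemma closure_swaps_eq_top : Subgroup.closure (swaps n) = ⊤ :=
  (Subgroup.eq_top_iff' _).mpr fun g =>
    mem_closure_swaps_of_truncate_apply_eq (Nat.zero_le n) g fun _ =>
      truncate_eq_truncate_iff.mpr fun _ ht => absurd ht (Nat.not_lt_zero _)

lemma map_levelFlip_eq_map_levelFlip_leftmost {A : Type*} [CommGroup A] (χ : treeGroup n →* A)
    {m : Fin n} {v : Leaf n} (hv : v ∈ levelVertices m) :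
    χ (levelFlip m {v}) = χ (levelFlip m {leftmost}) := by
  rw [← translate_mul_levelFlip_mul_translate hv, map_mul, map_mul, mul_right_comm, ← map_mul,
    translate_mul_self, map_one, one_mul]

theorem ker_levelParityHom_le_ker (χ : treeGroup n →* Multiplicative (ZMod 2)) :
    (levelParityHom n).ker ≤ χ.ker := by
  let c : Fin n → ZMod 2 := fun m => (χ (levelFlip m {leftmost})).toAdd
  let f : (Fin n → ZMod 2) →+ ZMod 2 :=
    AddMonoidHom.mk' (· ⬝ᵥ c) fun x y => add_dotProduct x y c
  have hχ : χ = (AddMonoidHom.toMultiplicative f).comp (levelParityHom n) := by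
    refine MonoidHom.eq_of_eqOn_dense closure_swaps_eq_top ?_
    rintro _ ⟨m, v, hv, rfl⟩
    rw [MonoidHom.comp_apply, levelParityHom_levelFlip hv,
      map_levelFlip_eq_map_levelFlip_leftmost χ hv]
    simp [f, c]
  intro g hg
  rw [MonoidHom.mem_ker, hχ, MonoidHom.comp_apply, MonoidHom.mem_ker.mp hg, map_one]

theorem levelParityHom_surjective : Function.Surjective (levelParityHom n) :=
  MonoidHom.surjective_of_ofAdd_single_mem_range _ fun m =>
    ⟨levelFlip m {leftmost}, levelParityHom_levelFlip (leftmost_mem_levelVertices m)⟩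

end treeGroup

/-- `W_n / Φ(W_n) ≅ (ℤ/2ℤ)^n`. -/
theorem treeGroup_quotient_frattini (n : ℕ) :
    Nonempty ((↥(treeGroup n) ⧸ frattini ↥(treeGroup n)) ≃* Multiplicative (Fin n → ZMod 2)) := by
  have hker : (treeGroup.levelParityHom n).ker = frattini (treeGroup n) :=
    treeGroup.isPGroup.ker_eq_frattini _ treeGroup.levelParityHom_surjective
      treeGroup.ker_levelParityHom_le_ker
  exact ⟨(QuotientGroup.quotientMulEquivOfEq hker.symm).trans
    (QuotientGroup.quotientKerEquivOfSurjective _ treeGroup.levelParityHom_surjective)⟩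
end

section
/- Let $w_n \in W_n$ be any $n$-odometer. Then the set $\{g \in W_n : w_n g \text{ is an } n\text{-odometer}\}$ equals the Frattini subgroup $\Phi(W_n)$. -/
/-!
For a tree automorphism `g` and a level `m`, count mod 2 the vertices of level `m` at which `g`
swaps the two subtrees below; this `parity g m` is a homomorphism `W_n → ℤ/2`. If `g` permutes
the `2^m` vertices of level `m` in one cycle, then `g^(2^m)` fixes that level and swaps below
each of its vertices `parity g m` times, once for every vertex of the orbit; so `g` also cycles
level `m + 1` iff `parity g m = 1`. Hence the odometers are the elements all of whose parities
are `1`, and `w * g` is an odometer iff all parities of `g` vanish.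

The kernels of the parities are maximal subgroups. Conversely a maximal subgroup of the
2-group `W_n` has index 2; since `W_n` is generated by the flips at single vertices, and flips
at vertices of the same level are conjugate, it is the kernel of a sum of parities. So the
Frattini subgroup is the common kernel of the parities.
-/

theorem MulAction.forall_exists_pow_smul_eq_iff {G α : Type*} [Group G] [MulAction G α]
    [Fintype α] {g : G} (hg : g ^ Fintype.card α = 1) :
    (∀ i j : α, ∃ t : ℕ, g ^ t • i = j) ↔
      ∀ (i : α) (d : ℕ), g ^ d • i = i ↔ Fintype.card α ∣ d := by
  set N := Fintype.card α
  have hmod (d : ℕ) (i : α) : g ^ d • i = g ^ (d % N) • i := by rw [pow_eq_pow_mod d hg]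
  have bijective_iff_transitive (i : α) :
      Function.Bijective (fun t : Fin N => g ^ (t : ℕ) • i) ↔ ∀ j, ∃ t : ℕ, g ^ t • i = j := by
    rw [Fintype.bijective_iff_surjective_and_card, Fintype.card_fin]
    refine ⟨fun h j => ?_, fun h => ⟨fun j => ?_, rfl⟩⟩
    · obtain ⟨t, rfl⟩ := h.1 j
      exact ⟨t, rfl⟩
    · obtain ⟨t, rfl⟩ := h j
      have : 0 < N := Fintype.card_pos_iff.mpr ⟨i⟩
      exact ⟨⟨t % N, Nat.mod_lt t this⟩, (hmod t i).symm⟩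
  have bijective_iff_period (i : α) :
      Function.Bijective (fun t : Fin N => g ^ (t : ℕ) • i) ↔ ∀ d : ℕ, g ^ d • i = i ↔ N ∣ d := by
    rw [Fintype.bijective_iff_injective_and_card, Fintype.card_fin, and_iff_left rfl]
    refine ⟨fun h d => ⟨fun hd => ?_, ?_⟩, fun h a b hab => ?_⟩
    · have hN : 0 < N := Fintype.card_pos_iff.mpr ⟨i⟩
      have := @h ⟨d % N, Nat.mod_lt d hN⟩ ⟨0, hN⟩ <| by
        simp only [pow_zero, one_smul]; rw [← hmod, hd]
      exact Nat.dvd_of_mod_eq_zero (congrArg Fin.val this)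
    · rintro ⟨k, rfl⟩
      rw [pow_mul, hg, one_pow, one_smul]
    · wlog hle : (a : ℕ) ≤ b generalizing a b
      · exact (this b a hab.symm (le_of_not_ge hle)).symm
      have : g ^ ((b : ℕ) - a) • i = i := by
        simp only at hab
        rw [← smul_left_cancel_iff (g ^ (a : ℕ)), smul_smul, ← pow_add, Nat.add_sub_cancel' hle,
          hab]
      have := Nat.eq_zero_of_dvd_of_lt ((h _).mp this) (by omega)
      exact Fin.ext (by omega)
  simp only [← bijective_iff_transitive, bijective_iff_period]

theorem IsPGroup.index_eq_of_isCoatom {p : ℕ} [Fact p.Prime] {G : Type*} [Group G] [Finite G]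
    (hG : IsPGroup p G) {M : Subgroup G} (hM : IsCoatom M) : M.index = p := by
  obtain ⟨k, hk⟩ := (hG.to_subgroup M).exists_card_eq
  obtain ⟨N, hN⟩ := hG.exists_card_eq
  have hp : 1 < p := (Fact.out : p.Prime).one_lt
  have hcard : p ^ k * M.index = p ^ N := hk ▸ hN ▸ M.card_mul_index
  have hlt : k < N := by
    by_contra! hle
    have := Subgroup.one_lt_index_of_ne_top hM.1
    have := Nat.pow_le_pow_right (by omega : 0 < p) hle
    nlinarith [Nat.pow_pos (n := k) (by omega : 0 < p)]
  obtain ⟨K, hK, hMK⟩ := Sylow.exists_subgroup_card_pow_succ (hN ▸ Nat.pow_dvd_pow p hlt) hk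
  have hMK' : M < K := lt_of_le_of_ne hMK fun h => by
    rw [← h, hk] at hK
    exact (Nat.pow_lt_pow_right hp k.lt_succ_self).ne hK
  have hKN : p ^ (k + 1) = p ^ N := by rw [← hK, ← hN, hM.2 K hMK', Subgroup.card_top]
  rw [← hKN, pow_succ] at hcard
  exact Nat.eq_of_mul_eq_mul_left (by positivity) hcard

theorem ZMod.two_ne_zero_iff_eq_one (a : ZMod 2) : a ≠ 0 ↔ a = 1 := by
  revert a; decide

theorem ZMod.two_add_eq_zero_iff (a b : ZMod 2) : a + b = 0 ↔ (a = 0 ↔ b = 0) := by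
  revert a b; decide

open Finset

variable {n : ℕ}

/-- The leaves `i` and `j` lie below the same vertex of level `m`. -/
def SamePrefix (m : ℕ) (i j : Leaf n) : Prop := ∀ t : Fin n, (t : ℕ) < m → i t = j t

instance (m : ℕ) : DecidableRel (SamePrefix (n := n) m) := fun _ _ => by
  unfold SamePrefix; infer_instance

namespace SamePrefix

variable {m : ℕ} {i j k : Leaf n}

@[refl] theorem refl (m : ℕ) (i : Leaf n) : SamePrefix m i i := fun _ _ => rfl

theorem symm (h : SamePrefix m i j) : SamePrefix m j i := fun t ht => (h t ht).symm

theorem trans (h : SamePrefix m i j) (h' : SamePrefix m j k) : SamePrefix m i k :=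
  fun t ht => (h t ht).trans (h' t ht)

theorem mono {m' : ℕ} (hm : m ≤ m') (h : SamePrefix m' i j) : SamePrefix m i j :=
  fun t ht => h t (ht.trans_le hm)

end SamePrefix

theorem samePrefix_iff_eq {i j : Leaf n} : SamePrefix n i j ↔ i = j :=
  ⟨fun h => funext fun t => h t t.2, fun h => h ▸ .refl n i⟩

theorem samePrefix_succ_iff {m : Fin n} {i j : Leaf n} :
    SamePrefix (m + 1) i j ↔ SamePrefix m i j ∧ i m = j m := by
  refine ⟨fun h => ⟨h.mono m.val.le_succ, h m m.val.lt_succ_self⟩, fun ⟨h, hm⟩ t ht => ?_⟩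
  rcases Nat.lt_succ_iff_lt_or_eq.mp ht with ht | ht
  · exact h t ht
  · rwa [Fin.ext ht]

theorem samePrefix_smul_iff (g : treeGroup n) (m : ℕ) (i j : Leaf n) :
    SamePrefix m (g • i) (g • j) ↔ SamePrefix m i j :=
  g.2 m i j

def truncate (m : ℕ) (ℓ : Leaf n) : Leaf n := fun t => if (t : ℕ) < m then ℓ t else false

/-- One leaf below each vertex of level `m`. -/
def levelReps (n m : ℕ) : Finset (Leaf n) :=
  Fintype.piFinset fun t : Fin n => if (t : ℕ) < m then univ else {false}

section truncate

variable {m : ℕ} {i j ℓ : Leaf n}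

theorem mem_levelReps : ℓ ∈ levelReps n m ↔ ∀ t : Fin n, m ≤ t → ℓ t = false := by
  simp only [levelReps, Fintype.mem_piFinset]
  refine forall_congr' fun t => ?_
  split_ifs with h
  · simp [h]
  · simp [not_lt.mp h]

theorem samePrefix_truncate (m : ℕ) (ℓ : Leaf n) : SamePrefix m (truncate m ℓ) ℓ := by
  intro t ht
  simp [truncate, ht]

theorem truncate_mem_levelReps (m : ℕ) (ℓ : Leaf n) : truncate m ℓ ∈ levelReps n m :=
  mem_levelReps.mpr fun t ht => by simp [truncate, ht]

theorem truncate_eq_self (h : ℓ ∈ levelReps n m) : truncate m ℓ = ℓ := by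
  funext t
  by_cases ht : (t : ℕ) < m
  · simp [truncate, ht]
  · simp [truncate, ht, mem_levelReps.mp h t (not_lt.mp ht)]

theorem truncate_eq_truncate_iff : truncate m i = truncate m j ↔ SamePrefix m i j := by
  refine ⟨fun h t ht => by simpa [truncate, ht] using congrFun h t, fun h => funext fun t => ?_⟩
  by_cases ht : (t : ℕ) < m
  · simp [truncate, ht, h t ht]
  · simp [truncate, ht]

theorem eq_of_samePrefix_of_mem_levelReps (hi : i ∈ levelReps n m) (hj : j ∈ levelReps n m)
    (h : SamePrefix m i j) : i = j := by
  rw [← truncate_eq_self hi, ← truncate_eq_self hj, truncate_eq_truncate_iff.mpr h]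

theorem card_levelReps (hm : m ≤ n) : #(levelReps n m) = 2 ^ m := by
  rw [levelReps, Fintype.card_piFinset]
  simp only [apply_ite Finset.card, card_univ, Fintype.card_bool, card_singleton]
  rw [Finset.prod_ite, prod_const_one, mul_one, prod_const, Fin.card_filter_val_lt,
    min_eq_right hm]

end truncate

/-- Whether `g` swaps the two edges below the vertex of level `m` above `ℓ`. -/
def switch (g : treeGroup n) (m : Fin n) (ℓ : Leaf n) : ZMod 2 := if (g • ℓ) m = ℓ m then 0 else 1

section switch

variable {g : treeGroup n} {m : Fin n} {ℓ : Leaf n}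

theorem switch_eq_zero_iff : switch g m ℓ = 0 ↔ (g • ℓ) m = ℓ m := by
  unfold switch; split_ifs with h <;> simp [h]

theorem switch_one (m : Fin n) (ℓ : Leaf n) : switch 1 m ℓ = 0 := by simp [switch]

theorem switch_mul (g h : treeGroup n) (m : Fin n) (ℓ : Leaf n) :
    switch (g * h) m ℓ = switch g m (h • ℓ) + switch h m ℓ := by
  simp only [switch, mul_smul]
  cases (g • h • ℓ) m <;> cases (h • ℓ) m <;> cases ℓ m <;> decide

theorem switch_pow (g : treeGroup n) (m : Fin n) (ℓ : Leaf n) (d : ℕ) :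
    switch (g ^ d) m ℓ = ∑ j ∈ range d, switch g m (g ^ j • ℓ) := by
  induction d with
  | zero => simp [switch_one]
  | succ d ih => rw [pow_succ', switch_mul, ih, sum_range_succ, add_comm]

theorem switch_congr (g : treeGroup n) {i j : Leaf n} (h : SamePrefix m i j) :
    switch g m i = switch g m j := by
  have key : (g • i) m = (g • j) m ↔ i m = j m := by
    have := samePrefix_smul_iff g (m + 1) i j
    rw [samePrefix_succ_iff, samePrefix_succ_iff, samePrefix_smul_iff] at this
    simpa [h] using this
  unfold switch
  cases hi : i m <;> cases hj : j m <;> cases hgi : (g • i) m <;> cases hgj : (g • j) m <;>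
    simp_all

end switch

def parity (g : treeGroup n) (m : Fin n) : ZMod 2 := ∑ v ∈ levelReps n m, switch g m v

theorem truncate_smul_truncate_smul {m : ℕ} (g : treeGroup n) {v : Leaf n}
    (hv : v ∈ levelReps n m) : truncate m (g⁻¹ • truncate m (g • v)) = v := by
  rw [← truncate_eq_self hv, truncate_eq_truncate_iff, truncate_eq_self hv]
  calc SamePrefix m (g⁻¹ • truncate m (g • v)) (g⁻¹ • g • v) :=
        (samePrefix_smul_iff _ _ _ _).mpr (samePrefix_truncate m _)
    _ = v := inv_smul_smul g v

theorem sum_levelReps_smul {β : Type*} [AddCommMonoid β] {m : ℕ} (g : treeGroup n)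
    {f : Leaf n → β} (hf : ∀ i j, SamePrefix m i j → f i = f j) :
    ∑ v ∈ levelReps n m, f (g • v) = ∑ v ∈ levelReps n m, f v :=
  sum_nbij' (fun v => truncate m (g • v)) (fun v => truncate m (g⁻¹ • v))
    (fun _ _ => truncate_mem_levelReps _ _) (fun _ _ => truncate_mem_levelReps _ _)
    (fun _ hv => truncate_smul_truncate_smul g hv)
    (fun v hv => by simpa using truncate_smul_truncate_smul g⁻¹ hv)
    (fun v _ => hf _ _ (samePrefix_truncate m _).symm)

theorem parity_mul (g h : treeGroup n) (m : Fin n) :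
    parity (g * h) m = parity g m + parity h m := by
  simp only [parity, switch_mul, sum_add_distrib]
  rw [sum_levelReps_smul h fun i j => switch_congr g]

theorem parity_one (m : Fin n) : parity (1 : treeGroup n) m = 0 := by
  simp [parity, switch_one]

def levelParity (m : Fin n) : treeGroup n →* Multiplicative (ZMod 2) :=
  MonoidHom.mk' (fun g => .ofAdd (parity g m)) fun g h => by rw [parity_mul, ofAdd_add]

theorem levelParity_apply (m : Fin n) (g : treeGroup n) :
    levelParity m g = .ofAdd (parity g m) := rfl

theorem parity_inv (g : treeGroup n) (m : Fin n) : parity g⁻¹ m = parity g m := by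
  simpa [levelParity_apply] using congrArg Multiplicative.toAdd (map_inv (levelParity m) g)

def levelStabilizer (n m : ℕ) : Subgroup (treeGroup n) where
  carrier := {g | ∀ ℓ : Leaf n, SamePrefix m (g • ℓ) ℓ}
  one_mem' ℓ := by simp only [one_smul]; rfl
  mul_mem' {g h} hg hh ℓ := by
    rw [mul_smul]
    exact (hg _).trans (hh ℓ)
  inv_mem' {g} hg ℓ := by
    simpa using ((samePrefix_smul_iff g⁻¹ m _ _).mpr (hg ℓ)).symm

theorem levelStabilizer_zero : levelStabilizer n 0 = ⊤ :=
  eq_top_iff.mpr fun _ _ _ _ ht => absurd ht (Nat.not_lt_zero _)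

theorem levelStabilizer_self : levelStabilizer n n = ⊥ :=
  eq_bot_iff.mpr fun _ hg => Subtype.ext <| Equiv.ext fun ℓ => samePrefix_iff_eq.mp (hg ℓ)

/-- The two swaps of `g ^ 2` at the vertex of level `m` above `ℓ` cancel. -/
theorem samePrefix_succ_sq_smul {g : treeGroup n} {m : Fin n} {ℓ : Leaf n}
    (h : SamePrefix m (g • ℓ) ℓ) : SamePrefix (m + 1) (g ^ 2 • ℓ) ℓ := by
  rw [samePrefix_succ_iff, ← switch_eq_zero_iff, sq, switch_mul, switch_congr g h,
    CharTwo.add_self_eq_zero, eq_self_iff_true, and_true, mul_smul]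
  exact (((samePrefix_smul_iff g m _ _).mpr h).trans h)

theorem pow_two_pow_mem_levelStabilizer (g : treeGroup n) {k : ℕ} (hk : k ≤ n) :
    g ^ 2 ^ k ∈ levelStabilizer n k := by
  induction k with
  | zero => simp [levelStabilizer_zero]
  | succ k ih =>
    intro ℓ
    rw [pow_succ, pow_mul]
    exact samePrefix_succ_sq_smul (m := ⟨k, hk⟩) (ih (by omega) ℓ)

theorem pow_two_pow_eq_one (g : treeGroup n) : g ^ 2 ^ n = 1 := by
  simpa [levelStabilizer_self] using pow_two_pow_mem_levelStabilizer g le_rfl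

theorem isPGroup_treeGroup : IsPGroup 2 (treeGroup n) := fun g => ⟨n, pow_two_pow_eq_one g⟩

/-- `g` permutes the `2 ^ k` vertices of level `k` in a single cycle. -/
def IsLevelCycle (k : ℕ) (g : treeGroup n) : Prop :=
  ∀ (ℓ : Leaf n) (d : ℕ), SamePrefix k (g ^ d • ℓ) ℓ ↔ 2 ^ k ∣ d

namespace IsLevelCycle

variable {g : treeGroup n}

theorem of_succ {m : Fin n} (h : IsLevelCycle (m + 1) g) : IsLevelCycle m g := by
  refine fun ℓ d => ⟨fun hd => ?_, ?_⟩
  · have := (h ℓ (d * 2)).mp (pow_mul g d 2 ▸ samePrefix_succ_sq_smul hd)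
    rwa [pow_succ, Nat.mul_dvd_mul_iff_right two_pos] at this
  · rintro ⟨q, rfl⟩
    rw [pow_mul]
    exact pow_mem (pow_two_pow_mem_levelStabilizer g m.is_lt.le) q ℓ

theorem eq_of_samePrefix {k : ℕ} (h : IsLevelCycle k g) {ℓ : Leaf n} {i j : ℕ} (hi : i < 2 ^ k)
    (hj : j < 2 ^ k) (hij : SamePrefix k (g ^ i • ℓ) (g ^ j • ℓ)) : i = j := by
  wlog hle : i ≤ j generalizing i j
  · exact (this hj hi hij.symm (le_of_not_ge hle)).symm
  rw [← Nat.add_sub_cancel' hle, pow_add, mul_smul, samePrefix_smul_iff] at hij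
  have := Nat.eq_zero_of_dvd_of_lt ((h ℓ _).mp hij.symm) (by omega)
  omega

/-- The orbit of `ℓ` visits every vertex of level `m` once in `2 ^ m` steps, so the swap of
`g ^ 2 ^ m` at the vertex above `ℓ` is the sum of the swaps of `g` over the whole level. -/
theorem switch_pow_two_pow {m : Fin n} (h : IsLevelCycle m g) (ℓ : Leaf n) :
    switch (g ^ 2 ^ (m : ℕ)) m ℓ = parity g m := by
  set orbit := fun j : ℕ => truncate m (g ^ j • ℓ)
  have hinj : Set.InjOn orbit (range (2 ^ (m : ℕ))) := fun i hi j hj hij =>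
    h.eq_of_samePrefix (mem_range.mp hi) (mem_range.mp hj) (truncate_eq_truncate_iff.mp hij)
  have himage : (range (2 ^ (m : ℕ))).image orbit = levelReps n m :=
    eq_of_subset_of_card_le (image_subset_iff.mpr fun _ _ => truncate_mem_levelReps _ _)
      (by rw [card_levelReps m.is_lt.le, card_image_of_injOn hinj, card_range])
  rw [switch_pow, parity, ← himage, sum_image hinj]
  exact sum_congr rfl fun j _ => switch_congr g (samePrefix_truncate m _).symm

theorem succ_iff {m : Fin n} (h : IsLevelCycle m g) :
    IsLevelCycle (m + 1) g ↔ parity g m = 1 := by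
  have hsw := h.switch_pow_two_pow
  constructor
  · intro hsucc
    rw [← ZMod.two_ne_zero_iff_eq_one]
    intro hp
    set ℓ : Leaf n := fun _ => false
    have hfix : SamePrefix (m + 1) (g ^ 2 ^ (m : ℕ) • ℓ) ℓ := by
      rw [samePrefix_succ_iff, ← switch_eq_zero_iff, hsw]
      exact ⟨(h ℓ _).mpr dvd_rfl, hp⟩
    have := (hsucc ℓ _).mp hfix
    rw [Nat.pow_dvd_pow_iff_le_right one_lt_two] at this
    omega
  · intro hp ℓ d
    have hswitch (q : ℕ) : switch (g ^ (2 ^ (m : ℕ) * q)) m ℓ = q := by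
      simp [pow_mul, switch_pow, hsw, hp]
    rw [samePrefix_succ_iff, h ℓ d, ← switch_eq_zero_iff, pow_succ]
    constructor
    · rintro ⟨⟨q, rfl⟩, hq⟩
      rw [hswitch, ZMod.natCast_eq_zero_iff] at hq
      exact Nat.mul_dvd_mul_left _ hq
    · rintro ⟨q, rfl⟩
      rw [mul_assoc, hswitch]
      exact ⟨dvd_mul_right _ _, (ZMod.natCast_eq_zero_iff _ 2).mpr (dvd_mul_right 2 q)⟩

end IsLevelCycle

theorem isLevelCycle_iff (g : treeGroup n) {k : ℕ} (hk : k ≤ n) :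
    IsLevelCycle k g ↔ ∀ m : Fin n, (m : ℕ) < k → parity g m = 1 := by
  induction k with
  | zero => simp [IsLevelCycle, SamePrefix]
  | succ k ih =>
    have hsucc := IsLevelCycle.succ_iff (g := g) (m := ⟨k, hk⟩)
    have hstep : IsLevelCycle (k + 1) g ↔ IsLevelCycle k g ∧ parity g ⟨k, hk⟩ = 1 :=
      ⟨fun h => ⟨h.of_succ (m := ⟨k, hk⟩), (hsucc h.of_succ).mp h⟩,
        fun h => (hsucc h.1).mpr h.2⟩
    rw [hstep, ih (by omega)]
    refine ⟨fun ⟨h, hpk⟩ m hm => ?_, fun h => ⟨fun m hm => h m (by omega), h _ k.lt_succ_self⟩⟩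
    rcases Nat.lt_succ_iff_lt_or_eq.mp hm with hm | hm
    · exact h m hm
    · rwa [show m = ⟨k, hk⟩ from Fin.ext hm]

theorem isOdometer_iff_isLevelCycle (g : treeGroup n) : IsOdometer n g ↔ IsLevelCycle n g := by
  have hcard : Fintype.card (Leaf n) = 2 ^ n := by simp
  have := MulAction.forall_exists_pow_smul_eq_iff (hcard ▸ pow_two_pow_eq_one g)
  rw [hcard] at this
  simp only [IsLevelCycle, samePrefix_iff_eq]
  exact this

theorem isOdometer_iff (g : treeGroup n) : IsOdometer n g ↔ ∀ m : Fin n, parity g m = 1 := by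
  rw [isOdometer_iff_isLevelCycle, isLevelCycle_iff g le_rfl]
  exact forall_congr' fun m => imp_iff_right m.is_lt

def translation (v : Leaf n) : treeGroup n :=
  ⟨Function.Involutive.toPerm (fun ℓ t => xor (ℓ t) (v t))
      fun ℓ => funext fun t => Bool.bne_self_right (ℓ t) (v t),
    fun _ _ _ => forall₂_congr fun _ _ => Bool.xor_left_inj⟩

theorem translation_smul_apply (v ℓ : Leaf n) (t : Fin n) :
    (translation v • ℓ) t = xor (ℓ t) (v t) :=
  rfl

theorem translation_inv (v : Leaf n) : (translation v)⁻¹ = translation v :=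
  inv_eq_of_mul_eq_one_right <| Subtype.ext <| Equiv.ext fun ℓ =>
    funext fun t => Bool.bne_self_right (ℓ t) (v t)

/-- The swap of the two subtrees below the vertex of level `m` above `v`, obtained by translating
the swap `a_{n - m}` at the leftmost vertex of that level. -/
def vertexFlip (m : Fin n) (v : Leaf n) : treeGroup n :=
  MulAut.conj (translation v) (aEl n (n - m))

theorem vertexFlip_smul_apply (m : Fin n) (v ℓ : Leaf n) (t : Fin n) :
    (vertexFlip m v • ℓ) t = if t = m ∧ SamePrefix m ℓ v then !ℓ t else ℓ t := by
  have hm : n - (n - m) = m := by omega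
  simp only [vertexFlip, MulAut.conj_apply, translation_inv, mul_smul, translation_smul_apply]
  rw [show ∀ x, aEl n (n - m) • x = aFun n (n - m) x from fun _ => rfl, aFun_apply, hm]
  have hcond : (∀ s : Fin n, (s : ℕ) < m → (translation v • ℓ) s = false) ↔
      SamePrefix m ℓ v := by
    simp [SamePrefix, translation_smul_apply]
  simp only [hcond, Fin.val_inj]
  split_ifs <;> simp [translation_smul_apply]

section vertexFlip

variable (m : Fin n) (v : Leaf n)

theorem switch_vertexFlip (m' : Fin n) (ℓ : Leaf n) :
    switch (vertexFlip m v) m' ℓ = if m' = m ∧ SamePrefix m ℓ v then 1 else 0 := by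
  unfold switch
  rw [vertexFlip_smul_apply]
  split_ifs <;> simp_all

theorem vertexFlip_mem_levelStabilizer : vertexFlip m v ∈ levelStabilizer n m :=
  fun ℓ t ht => by rw [vertexFlip_smul_apply, if_neg fun h => ht.ne (congrArg Fin.val h.1)]

theorem parity_vertexFlip (m' : Fin n) :
    parity (vertexFlip m v) m' = if m' = m then 1 else 0 := by
  simp only [parity, switch_vertexFlip]
  split_ifs with hm
  · subst hm
    rw [sum_eq_single (truncate m' v)]
    · simp [samePrefix_truncate]
    · intro ℓ hℓ hne
      rw [if_neg fun h => hne (eq_of_samePrefix_of_mem_levelReps hℓ (truncate_mem_levelReps _ _)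
        (h.2.trans (samePrefix_truncate _ v).symm))]
    · exact fun h => absurd (truncate_mem_levelReps _ _) h
  · simp [hm]

end vertexFlip

def vertexFlips (n : ℕ) : Set (treeGroup n) :=
  Set.range fun p : Fin n × Leaf n => vertexFlip p.1 p.2

/-- Below each vertex `v` of level `m` where `g` swaps the subtrees, undo the swap by
`vertexFlip m v`; what is left fixes level `m + 1`. -/
theorem levelStabilizer_le_closure_sup (m : Fin n) :
    levelStabilizer n m ≤ Subgroup.closure (vertexFlips n) ⊔ levelStabilizer n (m + 1) := by
  set H := Subgroup.closure (vertexFlips n) ⊔ levelStabilizer n (m + 1)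
  suffices ∀ T : Finset (Leaf n), ∀ g ∈ levelStabilizer n m,
      (∀ v ∈ levelReps n m, switch g m v = 1 → v ∈ T) → g ∈ H from
    fun g hg => this _ g hg fun v hv _ => hv
  intro T
  induction T using Finset.induction_on with
  | empty =>
    refine fun g hg hsupp => Subgroup.mem_sup_right fun ℓ => samePrefix_succ_iff.mpr ⟨hg ℓ, ?_⟩
    rw [← switch_eq_zero_iff, switch_congr g (samePrefix_truncate m ℓ).symm]
    by_contra h
    exact notMem_empty _ <|
      hsupp _ (truncate_mem_levelReps _ _) ((ZMod.two_ne_zero_iff_eq_one _).mp h)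
  | insert a T _ ih =>
    intro g hg hsupp
    by_cases hga : a ∈ levelReps n m ∧ switch g m a = 1
    · have hflip : vertexFlip m a ∈ H :=
        Subgroup.mem_sup_left (Subgroup.subset_closure ⟨(m, a), rfl⟩)
      refine mul_inv_cancel_right g (vertexFlip m a) ▸ H.mul_mem (ih _
        (mul_mem hg (vertexFlip_mem_levelStabilizer m a)) fun v hv hsw => ?_) (H.inv_mem hflip)
      rw [switch_mul, switch_congr g (vertexFlip_mem_levelStabilizer m a v),
        switch_vertexFlip] at hsw
      by_cases hva : SamePrefix m v a
      · obtain rfl := eq_of_samePrefix_of_mem_levelReps hv hga.1 hva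
        simp [hga.2, hva] at hsw
      · rw [if_neg fun h => hva h.2, add_zero] at hsw
        exact (mem_insert.mp (hsupp v hv hsw)).resolve_left fun h => hva (h ▸ .refl _ _)
    · refine ih g hg fun v hv hsw => (mem_insert.mp (hsupp v hv hsw)).resolve_left ?_
      rintro rfl
      exact hga ⟨hv, hsw⟩

theorem closure_vertexFlips : Subgroup.closure (vertexFlips n) = ⊤ := by
  suffices ∀ j, levelStabilizer n (n - j) ≤ Subgroup.closure (vertexFlips n) by
    simpa [levelStabilizer_zero] using this n
  intro j
  induction j with
  | zero => simp [levelStabilizer_self]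
  | succ j ih =>
    rcases lt_or_ge j n with hj | hj
    · have := levelStabilizer_le_closure_sup (n := n) ⟨n - (j + 1), by omega⟩
      rw [show n - (j + 1) + 1 = n - j by omega] at this
      exact this.trans (sup_le le_rfl ih)
    · rwa [show n - (j + 1) = n - j by omega]

theorem levelParity_surjective (m : Fin n) : Function.Surjective (levelParity m) := by
  intro y
  induction y using Multiplicative.rec with | ofAdd a => ?_
  fin_cases a
  · exact ⟨1, map_one _⟩
  · exact ⟨vertexFlip m default, by rw [levelParity_apply, parity_vertexFlip, if_pos rfl]; rfl⟩

theorem isCoatom_ker_levelParity (m : Fin n) : IsCoatom (levelParity m).ker := by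
  have : Fact (Nat.card (Multiplicative (ZMod 2))).Prime := ⟨by simp [Nat.prime_two]⟩
  have := isSimpleGroup_of_prime_card (α := Multiplicative (ZMod 2)) rfl
  rw [← MonoidHom.comap_bot]
  exact Subgroup.isCoatom_comap_of_surjective (levelParity_surjective m) isCoatom_bot

/-- Membership in `M` is a character of order two; flips of the same level are conjugate, so on
the generating flips it agrees with a combination of parities. -/
theorem iInf_ker_levelParity_le {M : Subgroup (treeGroup n)} (hM : M.index = 2) :
    ⨅ m, (levelParity m).ker ≤ M := by
  classical
  have hconj (t a : treeGroup n) : MulAut.conj t a ∈ M ↔ a ∈ M := by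
    rw [MulAut.conj_apply, Subgroup.mul_mem_iff_of_index_two hM,
      Subgroup.mul_mem_iff_of_index_two hM, inv_mem_iff]
    tauto
  set c : Fin n → ZMod 2 := fun m => if aEl n (n - m) ∈ M then 0 else 1
  have key (g : treeGroup n) : g ∈ M ↔ ∑ m, c m * parity g m = 0 := by
    induction closure_vertexFlips ▸ Subgroup.mem_top g using Subgroup.closure_induction with
    | mem _ h =>
      obtain ⟨⟨m, v⟩, rfl⟩ := h
      simp only [parity_vertexFlip, mul_ite, mul_one, mul_zero, sum_ite_eq', mem_univ, if_true]
      rw [vertexFlip, hconj]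
      simp only [c]
      split_ifs <;> simp_all
    | one => simp [parity_one]
    | mul g h _ _ hg hh =>
      rw [Subgroup.mul_mem_iff_of_index_two hM, hg, hh, ← ZMod.two_add_eq_zero_iff,
        ← sum_add_distrib]
      simp only [parity_mul, mul_add]
    | inv g _ hg => simp only [inv_mem_iff, hg, parity_inv]
  intro g hg
  simp only [Subgroup.mem_iInf, MonoidHom.mem_ker, levelParity_apply, ofAdd_eq_one] at hg
  simp [key, hg]

theorem frattini_treeGroup : frattini (treeGroup n) = ⨅ m, (levelParity m).ker := by
  refine le_antisymm (le_iInf fun m => frattini_le_coatom (isCoatom_ker_levelParity m)) ?_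
  have : Fact (Nat.Prime 2) := ⟨Nat.prime_two⟩
  exact le_iInf₂ fun M hM =>
    iInf_ker_levelParity_le (isPGroup_treeGroup.index_eq_of_isCoatom hM)

/-- for any `n`-odometer `w_n ∈ W_n`, the set
`{g ∈ W_n : w_n g is an n-odometer}` equals the Frattini subgroup `Φ(W_n)`. -/
theorem odometer_set_eq_frattini (n : ℕ) (w : ↥(treeGroup n))
    (hw : IsOdometer n (w : Equiv.Perm (Leaf n))) :
    {g : ↥(treeGroup n) | IsOdometer n ((w * g : ↥(treeGroup n)) : Equiv.Perm (Leaf n))} =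
      (frattini ↥(treeGroup n) : Set ↥(treeGroup n)) := by
  ext g
  rw [isOdometer_iff] at hw
  simp only [Set.mem_ofPred_eq, isOdometer_iff, parity_mul, hw, add_eq_left, SetLike.mem_coe,
    frattini_treeGroup, Subgroup.mem_iInf, MonoidHom.mem_ker, levelParity_apply, ofAdd_eq_one]
end

section
/- For any $n$-odometer $w_n \in W_n$ and any subgroup $G \leq W_n$, the set $G^{od}[w_n] = \{g \in G : w_n g \text{ is an } n\text{-odometer}\}$ is a normal subgroup of $G$, and it does not depend on the choice of the $n$-odometer $w_n$. -/
namespace OdometerAux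

open Equiv Function Finset

variable {n : ℕ}

/-- agreement below level `m` -/
def Agr (m : ℕ) (i j : Leaf n) : Prop := ∀ t : Fin n, (t : ℕ) < m → i t = j t

lemma agr_of_mem {σ : Equiv.Perm (Leaf n)} (hσ : σ ∈ treeGroup n) {m : ℕ} {i j : Leaf n}
    (h : Agr m i j) : Agr m (σ i) (σ j) := (hσ m i j).mpr h

def trc (K : Fin n) (ℓ : Leaf n) : Fin (K : ℕ) → Bool := fun s => ℓ (Fin.castLE K.isLt.le s)

def pad (K : Fin n) (v : Fin (K : ℕ) → Bool) : Leaf n :=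
  fun t => if h : (t : ℕ) < (K : ℕ) then v ⟨t, h⟩ else false

lemma trc_pad (K : Fin n) (v : Fin (K : ℕ) → Bool) : trc K (pad K v) = v := by
  funext s
  simp only [trc, pad, Fin.coe_castLE, s.isLt, dif_pos]

lemma pad_self (K : Fin n) (v : Fin (K : ℕ) → Bool) : pad K v K = false := by
  simp [pad]

lemma agr_iff_trc (K : Fin n) (i j : Leaf n) : Agr (K : ℕ) i j ↔ trc K i = trc K j := by
  constructor
  · intro h; funext s
    exact h (Fin.castLE K.isLt.le s) s.isLt
  · intro h t ht
    have := congrFun h ⟨(t : ℕ), ht⟩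
    simpa only [trc, Fin.castLE, Fin.eta] using this

lemma agr_pad_trc (K : Fin n) (ℓ : Leaf n) : Agr (K : ℕ) (pad K (trc K ℓ)) ℓ := by
  intro t ht
  simp only [pad, trc, ht, dif_pos]
  congr 1

def cc (K : Fin n) (σ : ↥(treeGroup n)) (v : Fin (K : ℕ) → Bool) : Bool :=
  (σ : Equiv.Perm (Leaf n)) (pad K v) K

def pp (K : Fin n) (σ : ↥(treeGroup n)) (v : Fin (K : ℕ) → Bool) : Fin (K : ℕ) → Bool :=
  trc K ((σ : Equiv.Perm (Leaf n)) (pad K v))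

lemma trc_apply (K : Fin n) (σ : ↥(treeGroup n)) (ℓ : Leaf n) :
    trc K ((σ : Equiv.Perm (Leaf n)) ℓ) = pp K σ (trc K ℓ) :=
  ((agr_iff_trc K _ _).mp (agr_of_mem σ.2 (agr_pad_trc K ℓ))).symm

lemma pp_one (K : Fin n) (v : Fin (K : ℕ) → Bool) : pp K 1 v = v := by
  simp only [pp, OneMemClass.coe_one, Perm.coe_one, id_eq, trc_pad]

lemma pp_mul (K : Fin n) (σ τ : ↥(treeGroup n)) (v : Fin (K : ℕ) → Bool) :
    pp K (σ * τ) v = pp K σ (pp K τ v) := by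
  show trc K (((σ * τ : ↥(treeGroup n)) : Equiv.Perm (Leaf n)) (pad K v)) = _
  rw [MulMemClass.coe_mul, Perm.mul_apply, trc_apply]
  rfl

def EK (K : Fin n) (σ : ↥(treeGroup n)) : Equiv.Perm (Fin (K : ℕ) → Bool) where
  toFun := pp K σ
  invFun := pp K σ⁻¹
  left_inv := fun v => by rw [← pp_mul, inv_mul_cancel, pp_one]
  right_inv := fun v => by rw [← pp_mul, mul_inv_cancel, pp_one]

lemma EK_coe (K : Fin n) (σ : ↥(treeGroup n)) : ⇑(EK K σ) = pp K σ := rfl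

lemma EK_mul (K : Fin n) (σ τ : ↥(treeGroup n)) : EK K (σ * τ) = EK K σ * EK K τ :=
  Equiv.ext fun v => pp_mul K σ τ v

lemma EK_one (K : Fin n) : EK K (1 : ↥(treeGroup n)) = 1 :=
  Equiv.ext fun v => pp_one K v

lemma EK_pow (K : Fin n) (σ : ↥(treeGroup n)) (t : ℕ) : EK K (σ ^ t) = EK K σ ^ t := by
  induction t with
  | zero => simpa using EK_one K
  | succ t ih => rw [pow_succ, pow_succ, EK_mul, ih]

lemma apply_val (K : Fin n) (σ : ↥(treeGroup n)) (ℓ : Leaf n) :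
    (σ : Equiv.Perm (Leaf n)) ℓ K = xor (ℓ K) (cc K σ (trc K ℓ)) := by
  set ℓ' := pad K (trc K ℓ) with hℓ'
  have h1 : Agr (K : ℕ) ℓ' ℓ := agr_pad_trc K ℓ
  have hK' : ℓ' K = false := pad_self K _
  cases hb : ℓ K
  · have h2 : Agr ((K : ℕ) + 1) ℓ' ℓ := by
      intro t ht
      rcases Nat.lt_succ_iff_lt_or_eq.mp ht with h | h
      · exact h1 t h
      · have : t = K := Fin.ext h
        rw [this, hK', hb]
    have := agr_of_mem σ.2 h2 K (Nat.lt_succ_self _)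
    rw [Bool.false_xor]
    exact this.symm
  · have hA : Agr (K : ℕ) ((σ : Equiv.Perm (Leaf n)) ℓ') ((σ : Equiv.Perm (Leaf n)) ℓ) :=
      agr_of_mem σ.2 h1
    have hne : (σ : Equiv.Perm (Leaf n)) ℓ K = !((σ : Equiv.Perm (Leaf n)) ℓ' K) := by
      by_contra hcon
      have heq : (σ : Equiv.Perm (Leaf n)) ℓ' K = (σ : Equiv.Perm (Leaf n)) ℓ K := by
        cases h1' : (σ : Equiv.Perm (Leaf n)) ℓ' K <;>
          cases h2' : (σ : Equiv.Perm (Leaf n)) ℓ K <;> simp_all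
      have hAgr : Agr ((K : ℕ) + 1) ((σ : Equiv.Perm (Leaf n)) ℓ')
          ((σ : Equiv.Perm (Leaf n)) ℓ) := by
        intro t ht
        rcases Nat.lt_succ_iff_lt_or_eq.mp ht with h | h
        · exact hA t h
        · have : t = K := Fin.ext h
          rw [this]; exact heq
      have := (σ.2 ((K : ℕ) + 1) ℓ' ℓ).mp hAgr K (Nat.lt_succ_self _)
      rw [hK', hb] at this
      exact Bool.false_ne_true this
    rw [hne, Bool.true_xor]
    rfl

lemma cc_mul (K : Fin n) (σ τ : ↥(treeGroup n)) (v : Fin (K : ℕ) → Bool) :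
    cc K (σ * τ) v = xor (cc K τ v) (cc K σ (pp K τ v)) := by
  show ((σ * τ : ↥(treeGroup n)) : Equiv.Perm (Leaf n)) (pad K v) K = _
  rw [MulMemClass.coe_mul, Perm.mul_apply, apply_val K σ]
  have h2 : (τ : Equiv.Perm (Leaf n)) (pad K v) K = cc K τ v := by
    rw [apply_val K τ, trc_pad, pad_self, Bool.false_xor]
  rw [h2]
  rfl

lemma cc_one (K : Fin n) (v : Fin (K : ℕ) → Bool) : cc K 1 v = false := by
  simp only [cc, OneMemClass.coe_one, Perm.coe_one, id_eq, pad_self]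

def bitc (b : Bool) : ZMod 2 := if b then 1 else 0

lemma bitc_xor (a b : Bool) : bitc (xor a b) = bitc a + bitc b := by
  cases a <;> cases b <;> decide

def eps (K : Fin n) (σ : ↥(treeGroup n)) : ZMod 2 := ∑ v : Fin (K : ℕ) → Bool, bitc (cc K σ v)

lemma eps_mul (K : Fin n) (σ τ : ↥(treeGroup n)) : eps K (σ * τ) = eps K σ + eps K τ := by
  unfold eps
  calc ∑ v : Fin (K : ℕ) → Bool, bitc (cc K (σ * τ) v)
      = ∑ v : Fin (K : ℕ) → Bool, (bitc (cc K τ v) + bitc (cc K σ (EK K τ v))) := by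
        refine Finset.sum_congr rfl fun v _ => ?_
        rw [cc_mul, bitc_xor]; rfl
    _ = (∑ v : Fin (K : ℕ) → Bool, bitc (cc K τ v))
        + ∑ v : Fin (K : ℕ) → Bool, bitc (cc K σ (EK K τ v)) := Finset.sum_add_distrib
    _ = (∑ v : Fin (K : ℕ) → Bool, bitc (cc K τ v))
        + ∑ v : Fin (K : ℕ) → Bool, bitc (cc K σ v) := by
        rw [Equiv.sum_comp (EK K τ) (fun w => bitc (cc K σ w))]
    _ = _ := add_comm _ _

lemma eps_one (K : Fin n) : eps K (1 : ↥(treeGroup n)) = 0 := by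
  unfold eps
  rw [Finset.sum_eq_zero]
  intro v _
  rw [cc_one]; rfl

lemma zmod2_cancel : ∀ a b : ZMod 2, a + b = 0 → a = b := by decide

lemma eps_inv (K : Fin n) (σ : ↥(treeGroup n)) : eps K σ⁻¹ = eps K σ := by
  apply zmod2_cancel
  rw [← eps_mul, inv_mul_cancel, eps_one]

lemma cc_pow (K : Fin n) (σ : ↥(treeGroup n)) (t : ℕ) (v : Fin (K : ℕ) → Bool) :
    bitc (cc K (σ ^ t) v) = ∑ s ∈ Finset.range t, bitc (cc K σ ((EK K σ ^ s) v)) := by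
  induction t with
  | zero => simp [cc_one, bitc]
  | succ t ih =>
      rw [pow_succ', cc_mul, bitc_xor, ih, Finset.sum_range_succ]
      congr 1
      have : pp K (σ ^ t) v = (EK K σ ^ t) v := by rw [← EK_pow]; rfl
      rw [this]

end OdometerAux
namespace OdometerAux

open Equiv Function Finset

variable {n : ℕ}

lemma orbit_lemma {X : Type*} [Fintype X] [DecidableEq X] (τ : Equiv.Perm X)
    (htr : ∀ v w : X, ∃ t : ℕ, (τ ^ t) v = w) :
    τ ^ Fintype.card X = 1 ∧
      ∀ v : X, Function.Bijective (fun s : Fin (Fintype.card X) => (τ ^ (s : ℕ)) v) := by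
  have key : ∀ v : X, Function.minimalPeriod ⇑τ v = Fintype.card X := by
    intro v
    have hper : v ∈ Function.periodicPts ⇑τ := by
      refine ⟨orderOf τ, orderOf_pos τ, ?_⟩
      show (⇑τ)^[orderOf τ] v = v
      rw [Equiv.Perm.iterate_eq_pow, pow_orderOf_eq_one]
      rfl
    have hp0 : 0 < Function.minimalPeriod ⇑τ v :=
      Function.minimalPeriod_pos_of_mem_periodicPts hper
    have hsurj : Function.Surjective
        (fun s : Fin (Function.minimalPeriod ⇑τ v) => (⇑τ)^[(s : ℕ)] v) := by
      intro w
      obtain ⟨t, ht⟩ := htr v w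
      refine ⟨⟨t % _, Nat.mod_lt _ hp0⟩, ?_⟩
      show (⇑τ)^[t % Function.minimalPeriod ⇑τ v] v = w
      rw [Function.iterate_mod_minimalPeriod_eq, Equiv.Perm.iterate_eq_pow]
      exact ht
    have hinj : Function.Injective
        (fun s : Fin (Function.minimalPeriod ⇑τ v) => (⇑τ)^[(s : ℕ)] v) := by
      intro a b hab
      exact Fin.ext (Function.iterate_injOn_Iio_minimalPeriod a.isLt b.isLt hab)
    have h1 := Fintype.card_le_of_surjective _ hsurj
    have h2 := Fintype.card_le_of_injective _ hinj
    simp only [Fintype.card_fin] at h1 h2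
    omega
  constructor
  · ext v
    show (τ ^ Fintype.card X) v = v
    have := Function.iterate_minimalPeriod (f := ⇑τ) (x := v)
    rw [key v, Equiv.Perm.iterate_eq_pow] at this
    exact this
  · intro v
    refine (Fintype.bijective_iff_injective_and_card _).mpr ⟨?_, by simp⟩
    intro a b hab
    refine Fin.ext (Function.iterate_injOn_Iio_minimalPeriod
      (by rw [key v]; exact a.isLt) (by rw [key v]; exact b.isLt) ?_)
    simpa only [Equiv.Perm.iterate_eq_pow] using hab

/-- transitivity at level `m` -/
def Tr (m : ℕ) (σ : ↥(treeGroup n)) : Prop :=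
  ∀ i j : Leaf n, ∃ t : ℕ, Agr m (((σ ^ t : ↥(treeGroup n)) : Equiv.Perm (Leaf n)) i) j

lemma tr_mono {m m' : ℕ} (h : m ≤ m') (σ : ↥(treeGroup n)) (htr : Tr m' σ) : Tr m σ := by
  intro i j
  obtain ⟨t, ht⟩ := htr i j
  exact ⟨t, fun s hs => ht s (lt_of_lt_of_le hs h)⟩

lemma tr_iff (K : Fin n) (σ : ↥(treeGroup n)) :
    Tr (K : ℕ) σ ↔ ∀ v w : Fin (K : ℕ) → Bool, ∃ t : ℕ, ((EK K σ) ^ t) v = w := by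
  constructor
  · intro h v w
    obtain ⟨t, ht⟩ := h (pad K v) (pad K w)
    refine ⟨t, ?_⟩
    have := (agr_iff_trc K _ _).mp ht
    rw [trc_pad] at this
    calc ((EK K σ) ^ t) v = (EK K (σ ^ t)) v := by rw [EK_pow]
      _ = pp K (σ ^ t) v := rfl
      _ = w := this
  · intro h i j
    obtain ⟨t, ht⟩ := h (trc K i) (trc K j)
    refine ⟨t, (agr_iff_trc K _ _).mpr ?_⟩
    rw [trc_apply]
    calc pp K (σ ^ t) (trc K i) = (EK K (σ ^ t)) (trc K i) := rfl
      _ = ((EK K σ) ^ t) (trc K i) := by rw [EK_pow]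
      _ = trc K j := ht

lemma cc_pow_card (K : Fin n) (σ : ↥(treeGroup n)) (htr : Tr (K : ℕ) σ) :
    (∀ v, pp K (σ ^ Fintype.card (Fin (K : ℕ) → Bool)) v = v) ∧
    ∀ v, bitc (cc K (σ ^ Fintype.card (Fin (K : ℕ) → Bool)) v) = eps K σ := by
  set N := Fintype.card (Fin (K : ℕ) → Bool) with hN
  obtain ⟨hone, hbij⟩ := orbit_lemma (EK K σ) ((tr_iff K σ).mp htr)
  constructor
  · intro v
    have : EK K (σ ^ N) = 1 := by rw [EK_pow]; exact hone
    calc pp K (σ ^ N) v = (EK K (σ ^ N)) v := rfl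
      _ = v := by rw [this]; rfl
  · intro v
    rw [cc_pow]
    calc ∑ s ∈ Finset.range N, bitc (cc K σ ((EK K σ ^ s) v))
        = ∑ s : Fin N, bitc (cc K σ ((EK K σ ^ (s : ℕ)) v)) := (Fin.sum_univ_eq_sum_range (fun s => bitc (cc K σ ((EK K σ ^ s) v))) N).symm
      _ = ∑ w : Fin (K : ℕ) → Bool, bitc (cc K σ w) :=
          Fintype.sum_bijective _ (hbij v) _ _ (fun s => rfl)
      _ = eps K σ := rfl

end OdometerAux
namespace OdometerAux

open Equiv Function Finset

variable {n : ℕ}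

lemma zmod2_dichotomy : ∀ x : ZMod 2, x = 0 ∨ x = 1 := by decide

lemma step (K : Fin n) (σ : ↥(treeGroup n)) :
    Tr ((K : ℕ) + 1) σ ↔ (Tr (K : ℕ) σ ∧ eps K σ = 1) := by
  set N := Fintype.card (Fin (K : ℕ) → Bool) with hN
  have hN0 : 0 < N := Fintype.card_pos
  constructor
  · intro h
    have hK : Tr (K : ℕ) σ := tr_mono (Nat.le_succ _) σ h
    refine ⟨hK, ?_⟩
    by_contra hne
    have h0 : eps K σ = 0 := (zmod2_dichotomy (eps K σ)).resolve_right hne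
    obtain ⟨hpp, hcc⟩ := cc_pow_card K σ hK
    have hccf : ∀ v, cc K (σ ^ N) v = false := by
      intro v
      have hv := hcc v
      rw [h0] at hv
      cases hb : cc K (σ ^ N) v
      · rfl
      · rw [hb] at hv; exact absurd hv (by decide)
    set z : Leaf n := (fun _ => false) with hz
    set z0 : Fin (K : ℕ) → Bool := (fun _ => false) with hz0
    have hpz : pad K z0 = z := by
      funext t
      simp only [pad, hz0, hz]
      split <;> rfl
    set P : ℕ → (Fin (K : ℕ) → Bool) × Bool :=
      (fun t => (pp K (σ ^ t) z0, cc K (σ ^ t) z0)) with hP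
    have hPadd : ∀ t, P (t + N) = P t := by
      intro t
      have hmul : σ ^ (t + N) = σ ^ N * σ ^ t := by rw [add_comm, pow_add]
      simp only [hP, hmul]
      rw [Prod.mk.injEq]
      constructor
      · rw [pp_mul, hpp]
      · rw [cc_mul, hccf, Bool.xor_false]
    have hPmod : ∀ t, P t = P (t % N) := by
      intro t
      have haux : ∀ q r, P (N * q + r) = P r := by
        intro q r
        induction q with
        | zero => simp
        | succ q ih =>
            have : N * (q + 1) + r = (N * q + r) + N := by ring
            rw [this, hPadd, ih]
      conv_lhs => rw [← Nat.div_add_mod t N]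
      exact haux _ _
    have hPsurj : ∀ (w : Fin (K : ℕ) → Bool) (b : Bool), ∃ t, P t = (w, b) := by
      intro w b
      set j : Leaf n :=
        (fun t => if h : (t : ℕ) < (K : ℕ) then w ⟨t, h⟩
          else if (t : ℕ) = (K : ℕ) then b else false) with hj
      obtain ⟨t, ht⟩ := h z j
      refine ⟨t, ?_⟩
      rw [hP, Prod.mk.injEq]
      have hAgrK : Agr (K : ℕ) (((σ ^ t : ↥(treeGroup n)) : Equiv.Perm (Leaf n)) z) j :=
        fun s hs => ht s (Nat.lt_succ_of_lt hs)
      constructor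
      · have h1 : pp K (σ ^ t) z0 =
            trc K (((σ ^ t : ↥(treeGroup n)) : Equiv.Perm (Leaf n)) z) := by
          rw [pp, hpz]
        rw [h1, (agr_iff_trc K _ _).mp hAgrK]
        funext s
        simp only [trc, hj, Fin.coe_castLE, s.isLt, dif_pos]
      · have h1 : cc K (σ ^ t) z0 =
            ((σ ^ t : ↥(treeGroup n)) : Equiv.Perm (Leaf n)) z K := by
          rw [cc, hpz]
        rw [h1, ht K (Nat.lt_succ_self _), hj]
        simp
    have hsurj2 : Function.Surjective (fun s : Fin N => P (s : ℕ)) := by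
      rintro ⟨w, b⟩
      obtain ⟨t, ht⟩ := hPsurj w b
      refine ⟨⟨t % N, Nat.mod_lt _ hN0⟩, ?_⟩
      show P (t % N) = (w, b)
      rw [← hPmod t]
      exact ht
    have hcard := Fintype.card_le_of_surjective _ hsurj2
    simp only [Fintype.card_prod, Fintype.card_bool, Fintype.card_fin] at hcard
    omega
  · rintro ⟨hK, he⟩
    obtain ⟨hpp, hcc⟩ := cc_pow_card K σ hK
    have hcct : ∀ v, cc K (σ ^ N) v = true := by
      intro v
      have hv := hcc v
      rw [he] at hv
      cases hb : cc K (σ ^ N) v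
      · rw [hb] at hv; exact absurd hv (by decide)
      · rfl
    intro i j
    obtain ⟨t, ht⟩ := hK i j
    set ℓ : Leaf n := ((σ ^ t : ↥(treeGroup n)) : Equiv.Perm (Leaf n)) i with hℓ
    by_cases hb : ℓ K = j K
    · refine ⟨t, fun s hs => ?_⟩
      rcases Nat.lt_succ_iff_lt_or_eq.mp hs with h' | h'
      · exact ht s h'
      · have : s = K := Fin.ext h'
        rw [this]; exact hb
    · refine ⟨N + t, fun s hs => ?_⟩
      have hmul : (σ ^ (N + t) : ↥(treeGroup n)) = σ ^ N * σ ^ t := pow_add σ N t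
      have happ : ((σ ^ (N + t) : ↥(treeGroup n)) : Equiv.Perm (Leaf n)) i =
          ((σ ^ N : ↥(treeGroup n)) : Equiv.Perm (Leaf n)) ℓ := by
        rw [hmul, MulMemClass.coe_mul, Perm.mul_apply, hℓ]
      rw [happ]
      have key1 : trc K (((σ ^ N : ↥(treeGroup n)) : Equiv.Perm (Leaf n)) ℓ) = trc K ℓ := by
        rw [trc_apply, hpp]
      have hagr : Agr (K : ℕ) (((σ ^ N : ↥(treeGroup n)) : Equiv.Perm (Leaf n)) ℓ) ℓ :=
        (agr_iff_trc K _ _).mpr key1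
      rcases Nat.lt_succ_iff_lt_or_eq.mp hs with h' | h'
      · rw [hagr s h']; exact ht s h'
      · have hsK : s = K := Fin.ext h'
        rw [hsK]
        rw [apply_val K (σ ^ N) ℓ, hcct, Bool.xor_true]
        cases h1 : ℓ K <;> cases h2 : j K <;> simp_all
end OdometerAux
namespace OdometerAux

open Equiv Function Finset

variable {n : ℕ}

lemma tr_of_eps (σ : ↥(treeGroup n)) (h : ∀ K : Fin n, eps K σ = 1) :
    ∀ m : ℕ, m ≤ n → Tr m σ := by
  intro m
  induction m with
  | zero =>
      intro _ i j
      exact ⟨0, fun s hs => absurd hs (Nat.not_lt_zero _)⟩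
  | succ m ih =>
      intro hm
      have hmn : m < n := hm
      exact (step ⟨m, hmn⟩ σ).mpr ⟨ih (le_of_lt hmn), h ⟨m, hmn⟩⟩

lemma eps_of_tr (σ : ↥(treeGroup n)) (h : Tr n σ) (K : Fin n) : eps K σ = 1 :=
  ((step K σ).mp (tr_mono K.isLt σ h)).2

lemma coe_pow_tg (σ : ↥(treeGroup n)) (t : ℕ) :
    ((σ ^ t : ↥(treeGroup n)) : Equiv.Perm (Leaf n)) = (σ : Equiv.Perm (Leaf n)) ^ t :=
  SubmonoidClass.coe_pow σ t

lemma odometer_iff (σ : ↥(treeGroup n)) :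
    IsOdometer n (σ : Equiv.Perm (Leaf n)) ↔ ∀ K : Fin n, eps K σ = 1 := by
  constructor
  · intro h
    refine eps_of_tr σ ?_
    intro i j
    obtain ⟨t, ht⟩ := h i j
    refine ⟨t, fun s _ => ?_⟩
    rw [coe_pow_tg, ht]
  · intro h i j
    obtain ⟨t, ht⟩ := tr_of_eps σ h n le_rfl i j
    refine ⟨t, ?_⟩
    rw [← coe_pow_tg]
    exact funext fun s => ht s s.isLt

lemma zmod2_one_add : ∀ x : ZMod 2, (1 + x = 1 ↔ x = 0) := by decide

lemma zmod2_conj : ∀ a b : ZMod 2, b = 0 → a + b + a = 0 := by decide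

/-- the kernel of all level signs -/
def Hker (n : ℕ) : Subgroup ↥(treeGroup n) where
  carrier := {g | ∀ K : Fin n, eps K g = 0}
  one_mem' := fun K => eps_one K
  mul_mem' := by
    intro a b ha hb K
    rw [eps_mul, ha K, hb K, add_zero]
  inv_mem' := by
    intro a ha K
    rw [eps_inv, ha K]

lemma odometer_set_eq (w : ↥(treeGroup n)) (hw : IsOdometer n (w : Equiv.Perm (Leaf n)))
    (G : Subgroup ↥(treeGroup n)) :
    {g | g ∈ G ∧ IsOdometer n ((w * g : ↥(treeGroup n)) : Equiv.Perm (Leaf n))} =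
      ((G ⊓ Hker n : Subgroup ↥(treeGroup n)) : Set ↥(treeGroup n)) := by
  ext g
  simp only [Set.mem_setOf_eq, SetLike.mem_coe, Subgroup.mem_inf]
  constructor
  · rintro ⟨hG, hod⟩
    refine ⟨hG, fun K => ?_⟩
    have h1 := (odometer_iff (w * g)).mp hod K
    rw [eps_mul, (odometer_iff w).mp hw K] at h1
    exact (zmod2_one_add _).mp h1
  · rintro ⟨hG, hker⟩
    refine ⟨hG, (odometer_iff (w * g)).mpr fun K => ?_⟩
    rw [eps_mul, (odometer_iff w).mp hw K, hker K, add_zero]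

end OdometerAux

/-- for any `n`-odometer `w_n ∈ W_n` and any subgroup `G ≤ W_n`, the set
`G^od[w_n] = {g ∈ G : w_n g is an n-odometer}` is a normal subgroup of `G`, and it does not
depend on the choice of the odometer `w_n`. -/
theorem odometer_subset_normal (n : ℕ) (w : ↥(treeGroup n))
    (hw : IsOdometer n (w : Equiv.Perm (Leaf n))) (G : Subgroup ↥(treeGroup n)) :
    (∃ H : Subgroup ↥(treeGroup n),
      (H : Set ↥(treeGroup n)) =
        {g | g ∈ G ∧ IsOdometer n ((w * g : ↥(treeGroup n)) : Equiv.Perm (Leaf n))} ∧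
      H ≤ G ∧ (H.subgroupOf G).Normal) ∧
    (∀ w' : ↥(treeGroup n), IsOdometer n (w' : Equiv.Perm (Leaf n)) →
      {g | g ∈ G ∧ IsOdometer n ((w * g : ↥(treeGroup n)) : Equiv.Perm (Leaf n))} =
      {g | g ∈ G ∧ IsOdometer n ((w' * g : ↥(treeGroup n)) : Equiv.Perm (Leaf n))}) := by
  constructor
  · refine ⟨G ⊓ OdometerAux.Hker n, (OdometerAux.odometer_set_eq w hw G).symm,
      inf_le_left, ?_⟩
    constructor
    intro x hx g
    rw [Subgroup.mem_subgroupOf] at hx ⊢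
    rcases hx with ⟨-, hker⟩
    refine ⟨by simp [Subgroup.mul_mem, Subgroup.inv_mem, g.2, x.2], fun K => ?_⟩
    have hco : ((↑(g * x * g⁻¹) : ↥(treeGroup n))) =
        (g : ↥(treeGroup n)) * (x : ↥(treeGroup n)) * (g : ↥(treeGroup n))⁻¹ := by
      push_cast
      rfl
    rw [hco, OdometerAux.eps_mul, OdometerAux.eps_mul, OdometerAux.eps_inv]
    exact OdometerAux.zmod2_conj _ _ (hker K)
  · intro w' hw'
    rw [OdometerAux.odometer_set_eq w hw G, OdometerAux.odometer_set_eq w' hw' G]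
end

section
/- Let $x \in W_n$ act trivially on the right half tree (fixing leaves $2^{n-1}+1,\dots,2^n$), with cycle type on the left half consisting of cycles of lengths $c_1,\dots,c_k$ summing to $2^{n-1}$. Then $a_n x$ is a product of $k$ disjoint cycles of lengths $2c_1, 2c_2, \dots, 2c_k$. -/
/-! Write `σ = a * g`, where the involution `a` exchanges the two halves of the leaves and `g`
fixes the right half. Then `σ` swaps the halves and `σ² = g` on the left half, so two left leaves
share a `σ`-cycle iff they share a `g`-orbit, and that `σ`-cycle is the `g`-orbit together with its
mirror image under `a`. As every `σ`-cycle meets the left half, the `σ`-cycles are in bijection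
with the `g`-orbits on the left half (cycles of `g` and left fixed points), with doubled lengths. -/

open Finset

theorem Finset.map_val_image_eq_map_val_image {ι β γ δ : Type*} [DecidableEq β] [DecidableEq γ]
    {s : Finset ι} {f : ι → β} {f' : ι → γ} {w : β → δ} {w' : γ → δ}
    (hf : ∀ x ∈ s, ∀ y ∈ s, f x = f y ↔ f' x = f' y) (hw : ∀ x ∈ s, w (f x) = w' (f' x)) :
    (s.image f).val.map w = (s.image f').val.map w' := by
  classical
  induction s using Finset.induction_on with
  | empty => simp
  | insert i s _ ih =>
    have hfs : ∀ x ∈ s, ∀ y ∈ s, f x = f y ↔ f' x = f' y := fun x hx y hy =>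
      hf x (mem_insert_of_mem hx) y (mem_insert_of_mem hy)
    have hws : ∀ x ∈ s, w (f x) = w' (f' x) := fun x hx => hw x (mem_insert_of_mem hx)
    have hmem : f i ∈ s.image f ↔ f' i ∈ s.image f' := by
      simp only [mem_image]
      exact exists_congr fun j => and_congr_right fun hj =>
        hf j (mem_insert_of_mem hj) i (mem_insert_self i s)
    rw [image_insert, image_insert]
    by_cases h : f i ∈ s.image f
    · rw [insert_eq_of_mem h, insert_eq_of_mem (hmem.mp h)]
      exact ih hfs hws
    · rw [insert_val_of_notMem h, insert_val_of_notMem (mt hmem.mpr h), Multiset.map_cons,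
        Multiset.map_cons, hw i (mem_insert_self i s), ih hfs hws]

theorem Multiset.filter_two_le_add_replicate_count_one {c : Multiset ℕ} (hc : ∀ m ∈ c, 1 ≤ m) :
    c.filter (2 ≤ ·) + Multiset.replicate (c.count 1) 1 = c := by
  conv_rhs => rw [← Multiset.filter_add_not (2 ≤ ·) c]
  rw [← Multiset.filter_eq' c 1]
  congr 1
  exact Multiset.filter_congr fun m hm => by
    have := hc m hm
    omega

namespace Equiv.Perm

section CycleOf

variable {α : Type*} [Fintype α] [DecidableEq α]

theorem cycleFactorsFinset_eq_image_cycleOf (f : Perm α) :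
    f.cycleFactorsFinset = f.support.image f.cycleOf := by
  ext c
  rw [mem_image]
  constructor
  · intro hc
    obtain ⟨x, hx⟩ := (mem_cycleFactorsFinset_iff.mp hc).1.nonempty_support
    exact ⟨x, mem_cycleFactorsFinset_support_le hc hx, (cycle_is_cycleOf hx hc).symm⟩
  · rintro ⟨x, hx, rfl⟩
    exact cycleOf_mem_cycleFactorsFinset_iff.mpr hx

theorem filter_sameCycle_eq_support_cycleOf {f : Perm α} {x : α} (hx : f x ≠ x) :
    univ.filter (f.SameCycle x) = (f.cycleOf x).support := by
  ext y
  simp [mem_support_cycleOf_iff' hx]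

theorem filter_sameCycle_eq_singleton {f : Perm α} {x : α} (hx : f x = x) :
    univ.filter (f.SameCycle x) = {x} := by
  ext y
  simp only [mem_filter, mem_univ, true_and, mem_singleton]
  exact ⟨fun h => (h.eq_of_left hx).symm, fun h => h ▸ SameCycle.refl f x⟩

end CycleOf

section InvolutionMulSupported

variable {α : Type*} {a g : Perm α} {p : α → Prop} {x y : α}

theorem pred_apply_iff_of_fixed (hg : ∀ x, ¬p x → g x = x) : p (g x) ↔ p x := by
  by_cases hx : p x
  · refine iff_of_true (by_contra fun hgx => ?_) hx
    rw [g.injective (hg _ hgx)] at hgx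
    exact hgx hx
  · rw [hg x hx]

theorem pred_pow_apply_iff_of_fixed (hg : ∀ x, ¬p x → g x = x) (k : ℕ) :
    p ((g ^ k) x) ↔ p x := by
  induction k with
  | zero => rfl
  | succ k ih => rw [pow_succ', Perm.mul_apply, pred_apply_iff_of_fixed hg, ih]

theorem mul_apply_of_not_pred (hg : ∀ x, ¬p x → g x = x) (hy : ¬p y) : (a * g) y = a y := by
  rw [Perm.mul_apply, hg y hy]

theorem mul_apply_ne_self (hpa : ∀ x, p (a x) ↔ ¬p x) (hg : ∀ x, ¬p x → g x = x) :
    (a * g) x ≠ x := fun h => by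
  have := hpa (g x)
  rw [← Perm.mul_apply, h, pred_apply_iff_of_fixed hg] at this
  exact iff_not_self this

theorem mul_apply_mul_apply_of_pred (ha : Function.Involutive a) (hpa : ∀ x, p (a x) ↔ ¬p x)
    (hg : ∀ x, ¬p x → g x = x) (hx : p x) : (a * g) ((a * g) x) = g x := by
  have hagx : ¬p (a (g x)) := fun h => (hpa _).mp h ((pred_apply_iff_of_fixed hg).mpr hx)
  simp only [Perm.mul_apply, hg _ hagx, ha (g x)]

theorem mul_pow_two_mul_apply (ha : Function.Involutive a) (hpa : ∀ x, p (a x) ↔ ¬p x)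
    (hg : ∀ x, ¬p x → g x = x) (hx : p x) (k : ℕ) : ((a * g) ^ (2 * k)) x = (g ^ k) x := by
  induction k with
  | zero => simp
  | succ k ih =>
    have hgk : p ((g ^ k) x) := (pred_pow_apply_iff_of_fixed hg k).mpr hx
    rw [show 2 * (k + 1) = 2 + 2 * k by ring, pow_add, Perm.mul_apply, ih, sq, Perm.mul_apply,
      mul_apply_mul_apply_of_pred ha hpa hg hgk, ← Perm.mul_apply, ← pow_succ']

theorem not_pred_mul_pow_two_mul_add_one_apply (ha : Function.Involutive a)
    (hpa : ∀ x, p (a x) ↔ ¬p x) (hg : ∀ x, ¬p x → g x = x) (hx : p x) (k : ℕ) :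
    ¬p (((a * g) ^ (2 * k + 1)) x) := by
  rw [pow_succ', Perm.mul_apply, mul_pow_two_mul_apply ha hpa hg hx, Perm.mul_apply, hpa, not_not,
    pred_apply_iff_of_fixed hg, pred_pow_apply_iff_of_fixed hg]
  exact hx

end InvolutionMulSupported

section InvolutionMulSupportedFinite

variable {α : Type*} [Finite α] {a g : Perm α} {p : α → Prop} {x y : α}

theorem SameCycle.pred_iff_of_fixed (hg : ∀ x, ¬p x → g x = x) (h : g.SameCycle x y) :
    p x ↔ p y := by
  obtain ⟨k, rfl⟩ := h.exists_nat_pow_eq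
  exact (pred_pow_apply_iff_of_fixed hg k).symm

theorem sameCycle_mul_iff (ha : Function.Involutive a) (hpa : ∀ x, p (a x) ↔ ¬p x)
    (hg : ∀ x, ¬p x → g x = x) (hx : p x) (hy : p y) :
    (a * g).SameCycle x y ↔ g.SameCycle x y := by
  constructor
  · intro h
    obtain ⟨n, rfl⟩ := h.exists_nat_pow_eq
    obtain ⟨k, rfl | rfl⟩ := Nat.even_or_odd' n
    · rw [mul_pow_two_mul_apply ha hpa hg hx]
      exact ⟨k, by simp⟩
    · exact absurd hy (not_pred_mul_pow_two_mul_add_one_apply ha hpa hg hx k)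
  · intro h
    obtain ⟨k, rfl⟩ := h.exists_nat_pow_eq
    exact ⟨(2 * k : ℕ), by rw [zpow_natCast, mul_pow_two_mul_apply ha hpa hg hx]⟩

theorem sameCycle_mul_iff_of_not_pred (ha : Function.Involutive a) (hpa : ∀ x, p (a x) ↔ ¬p x)
    (hg : ∀ x, ¬p x → g x = x) (hx : p x) (hy : ¬p y) :
    (a * g).SameCycle x y ↔ g.SameCycle x (a y) := by
  rw [← sameCycle_apply_right, mul_apply_of_not_pred hg hy]
  exact sameCycle_mul_iff ha hpa hg hx ((hpa y).mpr hy)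

end InvolutionMulSupportedFinite

section InvolutionMulSupportedFintype

variable {α : Type*} [Fintype α] [DecidableEq α] {a g : Perm α} {p : α → Prop} {x y : α}

theorem cycleOf_mul_eq_cycleOf_mul_iff (ha : Function.Involutive a)
    (hpa : ∀ x, p (a x) ↔ ¬p x) (hg : ∀ x, ¬p x → g x = x) (hx : p x) (hy : p y) :
    (a * g).cycleOf x = (a * g).cycleOf y ↔ g.SameCycle x y := by
  rw [← sameCycle_iff_cycleOf_eq_of_mem_support (mem_support.mpr (mul_apply_ne_self hpa hg))
    (mem_support.mpr (mul_apply_ne_self hpa hg)), sameCycle_mul_iff ha hpa hg hx hy]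

variable [DecidablePred p]

theorem card_support_cycleOf_mul (ha : Function.Involutive a) (hpa : ∀ x, p (a x) ↔ ¬p x)
    (hg : ∀ x, ¬p x → g x = x) (hx : p x) :
    #((a * g).cycleOf x).support = 2 * #(univ.filter (g.SameCycle x)) := by
  have hleft : (univ.filter ((a * g).SameCycle x)).filter p = univ.filter (g.SameCycle x) := by
    ext y
    simp only [mem_filter, mem_univ, true_and]
    constructor
    · rintro ⟨h, hy⟩
      exact (sameCycle_mul_iff ha hpa hg hx hy).mp h
    · intro h
      have hy := (h.pred_iff_of_fixed hg).mp hx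
      exact ⟨(sameCycle_mul_iff ha hpa hg hx hy).mpr h, hy⟩
  have hright : (univ.filter ((a * g).SameCycle x)).filter (¬p ·) =
      (univ.filter (g.SameCycle x)).image a := by
    ext y
    simp only [mem_filter, mem_univ, true_and, mem_image]
    constructor
    · rintro ⟨h, hy⟩
      exact ⟨a y, (sameCycle_mul_iff_of_not_pred ha hpa hg hx hy).mp h, ha y⟩
    · rintro ⟨z, h, rfl⟩
      have hz : ¬p (a z) := (hpa z).not_left.mpr ((h.pred_iff_of_fixed hg).mp hx)
      rw [sameCycle_mul_iff_of_not_pred ha hpa hg hx hz, ha z]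
      exact ⟨h, hz⟩
  rw [← filter_sameCycle_eq_support_cycleOf (mul_apply_ne_self hpa hg),
    ← card_filter_add_card_filter_not p, hleft, hright,
    card_image_of_injective _ a.injective, two_mul]

theorem cycleFactorsFinset_mul_eq_image (hpa : ∀ x, p (a x) ↔ ¬p x)
    (hg : ∀ x, ¬p x → g x = x) :
    (a * g).cycleFactorsFinset = (univ.filter p).image (a * g).cycleOf := by
  have hsupp : (a * g).support = univ :=
    eq_univ_of_forall fun x => mem_support.mpr (mul_apply_ne_self hpa hg)
  rw [cycleFactorsFinset_eq_image_cycleOf, hsupp]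
  ext κ
  simp only [mem_image, mem_filter, mem_univ, true_and]
  refine ⟨fun ⟨y, hy⟩ => ?_, fun ⟨y, _, hy⟩ => ⟨y, hy⟩⟩
  by_cases hpy : p y
  · exact ⟨y, hpy, hy⟩
  · refine ⟨(a * g) y, ?_, ?_⟩
    · rw [mul_apply_of_not_pred hg hpy, hpa]
      exact hpy
    · rw [← hy]
      exact (sameCycle_apply_left.mpr (SameCycle.refl _ y)).cycleOf_eq

theorem filter_eq_support_union_filter_fixed (hg : ∀ x, ¬p x → g x = x) :
    univ.filter p = g.support ∪ univ.filter fun x => p x ∧ g x = x := by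
  ext x
  by_cases hgx : g x = x
  · simp [hgx]
  · simpa [hgx] using by_contra fun hpx => hgx (hg x hpx)

theorem cycleType_mul_of_involutive (ha : Function.Involutive a) (hpa : ∀ x, p (a x) ↔ ¬p x)
    (hg : ∀ x, ¬p x → g x = x) :
    (a * g).cycleType =
      g.cycleType.map (2 * ·) + Multiset.replicate #(univ.filter fun x => p x ∧ g x = x) 2 := by
  set F := univ.filter fun x => p x ∧ g x = x
  have hsupp : ∀ x ∈ g.support, p x := fun x hx =>
    by_contra fun hpx => mem_support.mp hx (hg x hpx)
  have hF : ∀ y ∈ F, p y ∧ g y = y := fun y hy => (mem_filter.mp hy).2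
  have hdisj : _root_.Disjoint (g.support.image (a * g).cycleOf) (F.image (a * g).cycleOf) := by
    simp only [disjoint_left, mem_image, not_exists, not_and]
    rintro _ ⟨x, hx, rfl⟩ y hy hxy
    have hyx : g.SameCycle y x :=
      (cycleOf_mul_eq_cycleOf_mul_iff ha hpa hg (hF y hy).1 (hsupp x hx)).mp hxy
    obtain rfl := hyx.eq_of_left (hF y hy).2
    exact mem_support.mp hx (hF y hy).2
  rw [cycleType_def, cycleFactorsFinset_mul_eq_image hpa hg,
    filter_eq_support_union_filter_fixed hg, image_union, ← disjUnion_eq_union _ _ hdisj,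
    disjUnion_val, Multiset.map_add]
  congr 1
  · rw [Finset.map_val_image_eq_map_val_image (f' := g.cycleOf) (w' := fun c => 2 * #c.support),
      ← cycleFactorsFinset_eq_image_cycleOf, cycleType_def, Multiset.map_map]
    · rfl
    · intro x hx y hy
      rw [cycleOf_mul_eq_cycleOf_mul_iff ha hpa hg (hsupp x hx) (hsupp y hy),
        sameCycle_iff_cycleOf_eq_of_mem_support hx hy]
    · intro x hx
      rw [Function.comp_apply, card_support_cycleOf_mul ha hpa hg (hsupp x hx),
        filter_sameCycle_eq_support_cycleOf (mem_support.mp hx)]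
  · rw [Finset.map_val_image_eq_map_val_image (f' := id) (w' := fun _ => 2), image_id,
      Multiset.map_const', card_val]
    · intro x hx y hy
      rw [cycleOf_mul_eq_cycleOf_mul_iff ha hpa hg (hF x hx).1 (hF y hy).1]
      exact ⟨fun h => h.eq_of_left (hF x hx).2,
        fun h => (show x = y from h) ▸ SameCycle.refl g x⟩
    · intro x hx
      rw [Function.comp_apply, card_support_cycleOf_mul ha hpa hg (hF x hx).1,
        filter_sameCycle_eq_singleton (hF x hx).2, card_singleton]

end InvolutionMulSupportedFintype

end Equiv.Perm

theorem aPerm_self_apply_zero {n : ℕ} (hn : 0 < n) (ℓ : Leaf n) :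
    aPerm n n ℓ ⟨0, hn⟩ = !(ℓ ⟨0, hn⟩) := by
  simp [aPerm_apply, aFun_apply]

theorem aEl_mul_cycleType_general (n : ℕ) (hn : 0 < n) (x : ↥(treeGroup n)) (c : Multiset ℕ)
    (hx : ∀ ℓ : Leaf n, ℓ ⟨0, hn⟩ = true → (x : Equiv.Perm (Leaf n)) ℓ = ℓ)
    (hpos : ∀ m ∈ c, 1 ≤ m)
    (hcyc : c.filter (fun m => 2 ≤ m) = Equiv.Perm.cycleType (x : Equiv.Perm (Leaf n)))
    (hfix : Multiset.count 1 c =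
      Nat.card {ℓ : Leaf n // ℓ ⟨0, hn⟩ = false ∧ (x : Equiv.Perm (Leaf n)) ℓ = ℓ}) :
    Equiv.Perm.cycleType ((aEl n n * x : ↥(treeGroup n)) : Equiv.Perm (Leaf n)) =
      c.map (fun m => 2 * m) := by
  have hflip : ∀ ℓ : Leaf n, aPerm n n ℓ ⟨0, hn⟩ = false ↔ ¬ℓ ⟨0, hn⟩ = false := fun ℓ => by
    rw [aPerm_self_apply_zero hn]
    cases ℓ ⟨0, hn⟩ <;> simp
  have hright : ∀ ℓ : Leaf n, ¬ℓ ⟨0, hn⟩ = false → (x : Equiv.Perm (Leaf n)) ℓ = ℓ :=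
    fun ℓ hℓ => hx ℓ (Bool.not_eq_false _ ▸ hℓ)
  have hcount : Multiset.count 1 c =
      #(univ.filter fun ℓ : Leaf n => ℓ ⟨0, hn⟩ = false ∧ (x : Equiv.Perm (Leaf n)) ℓ = ℓ) := by
    rw [hfix, Nat.card_eq_fintype_card, Fintype.card_subtype]
  rw [show ((aEl n n * x : ↥(treeGroup n)) : Equiv.Perm (Leaf n)) = aPerm n n * x from rfl,
    Equiv.Perm.cycleType_mul_of_involutive (aFun_involutive n n) hflip hright, ← hcount, ← hcyc]
  conv_rhs => rw [← Multiset.filter_two_le_add_replicate_count_one hpos]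
  rw [Multiset.map_add, Multiset.map_replicate]

/-- if `x ∈ W_n` acts trivially on the right half tree and its full cycle type
on the left half (including 1-cycles, recorded by the multiset `c`) consists of cycles of
lengths summing to `2^(n-1)`, then `a_n x` is a product of disjoint cycles of the doubled
lengths `2·c`. -/
theorem aEl_mul_cycleType (n : ℕ) (hn : 0 < n) (x : ↥(treeGroup n)) (c : Multiset ℕ)
    (hx : ∀ ℓ : Leaf n, ℓ ⟨0, hn⟩ = true → (x : Equiv.Perm (Leaf n)) ℓ = ℓ)
    (hpos : ∀ m ∈ c, 1 ≤ m) (hsum : c.sum = 2 ^ (n - 1))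
    (hcyc : c.filter (fun m => 2 ≤ m) = Equiv.Perm.cycleType (x : Equiv.Perm (Leaf n)))
    (hfix : Multiset.count 1 c =
      Nat.card {ℓ : Leaf n // ℓ ⟨0, hn⟩ = false ∧ (x : Equiv.Perm (Leaf n)) ℓ = ℓ}) :
    Equiv.Perm.cycleType ((aEl n n * x : ↥(treeGroup n)) : Equiv.Perm (Leaf n)) =
      c.map (fun m => 2 * m) :=
  aEl_mul_cycleType_general n hn x c hx hpos hcyc hfix
end

section
/- Let $M_n = \langle x_n, v_{n-3},\dots,v_0 \rangle \leq W_n$ (for $n \geq 3$) where $v_i = x_{i+2}^2$, let $V_n = \langle v_{n-3},\dots,v_0\rangle$ and $N_n = V_n^{M_n}$ be the normal closure of $V_n$ in $M_n$. Then $M_n/N_n \cong \mathbb{Z}/4\mathbb{Z}$. -/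
/-!
Number the leaves so that coordinate `0` is the least significant bit. Then `x_n` adds `1` to the
label and each `v_i` fixes it modulo 4, so `g ↦ (label of g ℓ) - (label of ℓ) mod 4` is a
homomorphism `M_n → ℤ/4` sending `x_n` to `1` and killing `N_n`. Conversely `M_n / N_n` is cyclic,
generated by `x_n`, and `x_n ^ 4 ∈ N_n`: `x_n` is the root swap followed by `x_{n-1}` on the left
half, so `x_n ^ 4` is `v = x_{n-1} ^ 2 = v_{n-3}` on the left half times its `x_n`-conjugate on
the right half.
-/

namespace Subgroup

variable {G : Type*} [Group G]

def relNormalClosure (M : Subgroup G) (S : Set G) : Subgroup G :=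
  closure {g | ∃ m ∈ M, ∃ s ∈ S, g = m * s * m⁻¹}

variable {M : Subgroup G} {S : Set G}

theorem subset_relNormalClosure : S ⊆ relNormalClosure M S :=
  fun s hs => subset_closure ⟨1, M.one_mem, s, hs, by group⟩

theorem relNormalClosure_le (hS : S ⊆ M) : relNormalClosure M S ≤ M :=
  closure_le _ |>.mpr <| by
    rintro _ ⟨m, hm, s, hs, rfl⟩
    exact mul_mem (mul_mem hm (hS hs)) (inv_mem hm)

theorem conj_mem_relNormalClosure {m h : G} (hm : m ∈ M) (hh : h ∈ relNormalClosure M S) :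
    m * h * m⁻¹ ∈ relNormalClosure M S := by
  suffices relNormalClosure M S ≤ (relNormalClosure M S).comap (MulAut.conj m).toMonoidHom from
    this hh
  refine closure_le _ |>.mpr ?_
  rintro _ ⟨m', hm', s, hs, rfl⟩
  exact subset_closure ⟨m * m', mul_mem hm hm', s, hs, by simp; group⟩

theorem relNormalClosure_subgroupOf_le_ker {A : Type*} [CommGroup A] (hS : S ⊆ M) (ψ : M →* A)
    (hψ : ∀ s : M, (s : G) ∈ S → ψ s = 1) : (relNormalClosure M S).subgroupOf M ≤ ψ.ker := by
  suffices relNormalClosure M S ≤ ψ.ker.map M.subtype by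
    intro g hg
    obtain ⟨g', hg', hgg'⟩ := this hg
    rwa [← Subtype.ext hgg']
  refine closure_le _ |>.mpr ?_
  rintro _ ⟨m, hm, s, hs, rfl⟩
  refine ⟨⟨m, hm⟩ * ⟨s, hS hs⟩ * (⟨m, hm⟩ : M)⁻¹, ?_, rfl⟩
  change ψ _ = 1
  rw [map_mul, map_mul, hψ ⟨s, hS hs⟩ hs, mul_one, map_inv, mul_inv_cancel]

theorem exists_zpow_mul_of_mem_closure_insert {x g : G} (hg : g ∈ closure (insert x S)) :
    ∃ k : ℤ, ∃ h ∈ relNormalClosure (closure (insert x S)) S, g = x ^ k * h := by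
  have hx : x ∈ closure (insert x S) := subset_closure (Set.mem_insert x S)
  induction hg using closure_induction with
  | mem g hg =>
    rcases hg with rfl | hg
    · exact ⟨1, 1, one_mem _, by group⟩
    · exact ⟨0, g, subset_relNormalClosure hg, by group⟩
  | one => exact ⟨0, 1, one_mem _, by group⟩
  | mul a b _ _ ha hb =>
    obtain ⟨k, h, hh, rfl⟩ := ha
    obtain ⟨k', h', hh', rfl⟩ := hb
    refine ⟨k + k', (x ^ (-k') * h * (x ^ (-k'))⁻¹) * h',
      mul_mem (conj_mem_relNormalClosure (zpow_mem hx _) hh) hh', by group⟩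
  | inv a _ ha =>
    obtain ⟨k, h, hh, rfl⟩ := ha
    exact ⟨-k, x ^ k * h⁻¹ * (x ^ k)⁻¹,
      conj_mem_relNormalClosure (zpow_mem hx _) (inv_mem hh), by group⟩

theorem surjective_and_ker_eq_relNormalClosure {x : G} {k : ℕ}
    (ψ : closure (insert x S) →* Multiplicative (ZMod k))
    (hψx : ψ ⟨x, subset_closure (Set.mem_insert x S)⟩ = Multiplicative.ofAdd 1)
    (hψS : ∀ s : closure (insert x S), (s : G) ∈ S → ψ s = 1)
    (hxk : x ^ k ∈ relNormalClosure (closure (insert x S)) S) :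
    Function.Surjective ψ ∧
      ψ.ker = (relNormalClosure (closure (insert x S)) S).subgroupOf (closure (insert x S)) := by
  set X : closure (insert x S) := ⟨x, subset_closure (Set.mem_insert x S)⟩
  have hψX (j : ℤ) : ψ (X ^ j) = Multiplicative.ofAdd (j : ZMod k) := by
    rw [map_zpow, hψx, ← ofAdd_zsmul, zsmul_one]
  have hSM : S ⊆ closure (insert x S) := subset_closure.trans' (Set.subset_insert x S)
  have hN := relNormalClosure_subgroupOf_le_ker hSM ψ hψS
  refine ⟨fun z => ?_, le_antisymm (fun g hg => ?_) hN⟩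
  · obtain ⟨j, hj⟩ := ZMod.intCast_surjective (Multiplicative.toAdd z)
    exact ⟨X ^ j, by rw [hψX, hj]; rfl⟩
  · obtain ⟨j, h, hh, hg'⟩ := exists_zpow_mul_of_mem_closure_insert g.2
    have hgX : g = X ^ j * ⟨h, relNormalClosure_le hSM hh⟩ := Subtype.ext hg'
    have hj : (j : ZMod k) = 0 := by
      rw [MonoidHom.mem_ker, hgX, map_mul, hψX, hN hh, mul_one] at hg
      exact hg
    obtain ⟨q, rfl⟩ := (ZMod.intCast_zmod_eq_zero_iff_dvd j k).mp hj
    rw [mem_subgroupOf, hg', zpow_mul, zpow_natCast]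
    exact mul_mem (zpow_mem hxk q) hh

end Subgroup

theorem mul_pow_four_of_commute {G : Type*} [Group G] {y f : G} (hf : f * f = 1)
    (h : Commute y (f * y * f)) : (y * f) ^ 4 = y ^ 2 * ((y * f) * y ^ 2 * (y * f)⁻¹) := by
  have hf' : f⁻¹ = f := inv_eq_of_mul_eq_one_right hf
  have hsq : (f * y * f) ^ 2 = f * y ^ 2 * f := by
    simpa only [hf'] using conj_pow (a := f) (b := y) (i := 2)
  calc (y * f) ^ 4
    _ = (y * (f * y * f)) ^ 2 := by
      rw [show 4 = 2 * 2 from rfl, pow_mul, sq (y * f)]; simp only [mul_assoc]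
    _ = y ^ 2 * (y * (f * y * f) ^ 2 * y⁻¹) := by
      rw [h.mul_pow, (h.pow_right 2).eq, mul_inv_cancel_right]
    _ = y ^ 2 * ((y * f) * y ^ 2 * (y * f)⁻¹) := by rw [hsq, mul_inv_rev, hf']; group

section Translation

variable {G X A : Type*} [Group G] [MulAction G X] [AddCommGroup A]

def translationSubgroup (τ : X → A) : Subgroup G where
  carrier := {g | ∃ c : A, ∀ x, τ (g • x) = τ x + c}
  one_mem' := ⟨0, by simp⟩
  mul_mem' := by
    rintro g h ⟨c, hc⟩ ⟨d, hd⟩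
    exact ⟨d + c, fun x => by rw [mul_smul, hc, hd, add_assoc]⟩
  inv_mem' := by
    rintro g ⟨c, hc⟩
    exact ⟨-c, fun x => by rw [eq_add_neg_iff_add_eq, ← hc, smul_inv_smul]⟩

theorem apply_smul_eq_of_mem_translationSubgroup {τ : X → A} {g : G}
    (hg : g ∈ translationSubgroup τ) (x₀ x : X) : τ (g • x) = τ x + (τ (g • x₀) - τ x₀) := by
  obtain ⟨c, hc⟩ := hg
  rw [hc, hc, add_sub_cancel_left]

def translationHom (τ : X → A) (x₀ : X) : translationSubgroup (G := G) τ →* Multiplicative A where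
  toFun g := Multiplicative.ofAdd (τ ((g : G) • x₀) - τ x₀)
  map_one' := by simp
  map_mul' g h := by
    rw [← ofAdd_add, Subgroup.coe_mul, mul_smul,
      apply_smul_eq_of_mem_translationSubgroup g.2 x₀]
    abel_nf

theorem translationHom_eq_ofAdd {τ : X → A} (x₀ : X) {g : translationSubgroup (G := G) τ} {c : A}
    (hc : ∀ x, τ ((g : G) • x) = τ x + c) : translationHom τ x₀ g = Multiplicative.ofAdd c := by
  simp [translationHom, hc]

end Translation

section Tree

variable {n : ℕ}

theorem treeGroup_ext {g h : treeGroup n} (H : ∀ ℓ : Leaf n, g • ℓ = h • ℓ) : g = h :=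
  Subtype.ext (Equiv.ext H)

theorem aEl_smul_apply (k : ℕ) (ℓ : Leaf n) (t : Fin n) :
    (aEl n k • ℓ) t =
      if (t : ℕ) = n - k ∧ ∀ s : Fin n, (s : ℕ) < n - k → ℓ s = false then !(ℓ t) else ℓ t :=
  rfl

theorem aEl_smul_apply_of_ne {k : ℕ} (ℓ : Leaf n) {t : Fin n} (ht : (t : ℕ) ≠ n - k) :
    (aEl n k • ℓ) t = ℓ t := by
  rw [aEl_smul_apply, if_neg (ht ·.1)]

theorem aEl_smul_eq_self {k : ℕ} {ℓ : Leaf n} {s : Fin n} (hs : (s : ℕ) < n - k)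
    (hℓ : ℓ s = true) : aEl n k • ℓ = ℓ := by
  funext t
  rw [aEl_smul_apply, if_neg fun h => by simp [h.2 s hs] at hℓ]

theorem aEl_mul_self (k : ℕ) : aEl n k * aEl n k = 1 :=
  treeGroup_ext fun ℓ => aFun_involutive n k ℓ

theorem xEl_succ (k : ℕ) : xEl n (k + 1) = xEl n k * aEl n (k + 1) := by
  rw [xEl, List.range_succ, List.map_append, List.prod_append, List.map_singleton,
    List.prod_singleton, xEl]

theorem xEl_smul_apply_of_lt {k : ℕ} (ℓ : Leaf n) {t : Fin n} (ht : (t : ℕ) < n - k) :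
    (xEl n k • ℓ) t = ℓ t := by
  induction k generalizing ℓ with
  | zero => simp [xEl]
  | succ k ih => rw [xEl_succ, mul_smul, ih _ (by omega), aEl_smul_apply_of_ne _ (by omega)]

theorem xEl_smul_eq_self {k : ℕ} {ℓ : Leaf n} {s : Fin n} (hs : (s : ℕ) < n - k)
    (hℓ : ℓ s = true) : xEl n k • ℓ = ℓ := by
  induction k with
  | zero => simp [xEl]
  | succ k ih => rw [xEl_succ, mul_smul, aEl_smul_eq_self hs hℓ, ih (by omega)]

theorem xEl_pow_four {k : ℕ} (hk : k + 1 = n) :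
    xEl n n ^ 4 = xEl n k ^ 2 * (xEl n n * xEl n k ^ 2 * (xEl n n)⁻¹) := by
  subst hk
  have h0 : ((0 : Fin (k + 1)) : ℕ) < k + 1 - k := by simp
  have hflip (ℓ : Leaf (k + 1)) : (aEl (k + 1) (k + 1) • ℓ) 0 = !(ℓ 0) := by
    rw [aEl_smul_apply, if_pos ⟨by simp, fun s hs => by omega⟩]
  set y := xEl (k + 1) k
  set f := aEl (k + 1) (k + 1)
  have hy (ℓ : Leaf (k + 1)) (hℓ : ℓ 0 = true) : y • ℓ = ℓ := xEl_smul_eq_self h0 hℓ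
  -- `y` moves only leaves of the left half (coordinate `0` false), `f * y * f` only the right half
  have hdisj : Equiv.Perm.Disjoint (y : Equiv.Perm (Leaf (k + 1))) (f * y * f : treeGroup _) := by
    intro ℓ
    cases hℓ : ℓ 0
    · right
      change f • y • f • ℓ = ℓ
      rw [hy _ (by rw [hflip, hℓ]; rfl), ← mul_smul, aEl_mul_self, one_smul]
    · exact .inl (hy ℓ hℓ)
  rw [xEl_succ]
  exact mul_pow_four_of_commute (aEl_mul_self _) (Subtype.ext hdisj.commute.eq)

end Tree

section Label

variable {n : ℕ}

def labelMod4 (ℓ : Leaf (n + 2)) : ZMod 4 := (ℓ 0).toNat + 2 * (ℓ 1).toNat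

theorem aEl_smul_apply_zero (ℓ : Leaf (n + 2)) : (aEl (n + 2) (n + 2) • ℓ) 0 = !(ℓ 0) := by
  rw [aEl_smul_apply, if_pos ⟨by simp, fun s hs => by omega⟩]

theorem aEl_smul_apply_one (ℓ : Leaf (n + 2)) :
    (aEl (n + 2) (n + 1) • ℓ) 1 = if ℓ 0 = false then !(ℓ 1) else ℓ 1 := by
  have hspine : (∀ s : Fin (n + 2), (s : ℕ) < n + 2 - (n + 1) → ℓ s = false) ↔ ℓ 0 = false := by
    refine ⟨fun h => h 0 (by simp), fun h s hs => ?_⟩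
    rwa [show s = 0 from Fin.ext (by rw [Fin.val_zero]; omega)]
  simp only [aEl_smul_apply, hspine, Fin.val_one]
  simp

theorem labelMod4_xEl_smul (ℓ : Leaf (n + 2)) :
    labelMod4 (xEl (n + 2) (n + 2) • ℓ) = labelMod4 ℓ + 1 := by
  rw [xEl_succ, xEl_succ, mul_smul, mul_smul, labelMod4, labelMod4,
    xEl_smul_apply_of_lt _ (by simp), xEl_smul_apply_of_lt _ (by simp), aEl_smul_apply_one,
    aEl_smul_apply_of_ne _ (by simp), aEl_smul_apply_zero, aEl_smul_apply_of_ne _ (by simp)]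
  cases ℓ 0 <;> cases ℓ 1 <;> decide

theorem labelMod4_vEl_smul {i : ℕ} (hi : i + 1 ≤ n) (ℓ : Leaf (n + 2)) :
    labelMod4 (vEl (n + 2) i • ℓ) = labelMod4 ℓ := by
  have h0 (k : ℕ) (hk : k ≤ n + 1) (ℓ : Leaf (n + 2)) : (xEl (n + 2) k • ℓ) 0 = ℓ 0 :=
    xEl_smul_apply_of_lt ℓ (by simp; omega)
  rw [vEl, sq, mul_smul, labelMod4, labelMod4, h0 _ (by omega), h0 _ (by omega)]
  rcases (show i + 2 ≤ n ∨ i + 1 = n by omega) with hi | rfl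
  · rw [xEl_smul_apply_of_lt _ (by simp; omega), xEl_smul_apply_of_lt _ (by simp; omega)]
  · have h1 (ℓ : Leaf (i + 1 + 2)) :
        (xEl (i + 1 + 2) (i + 2) • ℓ) 1 = if ℓ 0 = false then !(ℓ 1) else ℓ 1 := by
      rw [xEl_succ, mul_smul, xEl_smul_apply_of_lt _ (by simp), aEl_smul_apply_one]
    rw [h1, h1, h0 _ (by omega)]
    cases ℓ 0 <;> simp

end Label

/-- for `n ≥ 3`, with `M_n = ⟨x_n, v_{n-3}, …, v_0⟩` and `N_n` the normal
closure in `M_n` of `V_n = ⟨v_{n-3}, …, v_0⟩`, one has `M_n / N_n ≅ ℤ/4ℤ`. -/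
theorem Mgrp_quotient_Ngrp (n : ℕ) (hn : 3 ≤ n) :
    ∃ φ : ↥(MgrpK n n) →* Multiplicative (ZMod 4),
      Function.Surjective φ ∧ φ.ker = (NgrpK n n).subgroupOf (MgrpK n n) := by
  obtain ⟨n, rfl⟩ : ∃ m, n = m + 2 := ⟨n - 2, by omega⟩
  have hvShift {i : ℕ} (hi : i + 3 ≤ n + 2) (ℓ : Leaf (n + 2)) :
      labelMod4 (vEl (n + 2) i • ℓ) = labelMod4 ℓ + 0 := by
    rw [labelMod4_vEl_smul (by omega), add_zero]
  have hM : MgrpK (n + 2) (n + 2) ≤ translationSubgroup (labelMod4 (n := n)) := by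
    refine Subgroup.closure_le _ |>.mpr (Set.insert_subset ⟨1, labelMod4_xEl_smul⟩ ?_)
    rintro _ ⟨i, hi, rfl⟩
    exact ⟨0, hvShift hi⟩
  have hv : xEl (n + 2) (n + 1) ^ 2 ∈ VsetK (n + 2) (n + 2) :=
    ⟨n - 1, by omega, by rw [vEl, show n - 1 + 2 = n + 1 by omega]⟩
  refine ⟨(translationHom (labelMod4 (n := n)) fun _ => false).comp (Subgroup.inclusion hM),
    Subgroup.surjective_and_ker_eq_relNormalClosure _ ?_ ?_ ?_⟩
  · exact translationHom_eq_ofAdd _ labelMod4_xEl_smul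
  · rintro ⟨_, _⟩ ⟨i, hi, rfl⟩
    exact translationHom_eq_ofAdd _ (hvShift hi)
  · rw [xEl_pow_four rfl]
    exact mul_mem (Subgroup.subset_relNormalClosure hv) <|
      Subgroup.conj_mem_relNormalClosure (Subgroup.subset_closure (Set.mem_insert _ _))
        (Subgroup.subset_relNormalClosure hv)
end

section
/- The inverse limit $M = \varprojlim M_n$ of the groups $M_n = \langle x_n, v_{n-3},\dots,v_0\rangle$ has Hausdorff dimension $1/2$ in $W = \mathrm{Aut}(T)$; i.e., $\lim_{n\to\infty} \log_2|M_n| / \log_2|W_n| = 1/2$. -/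
/-!
Write `(a, b)` for `branch (a, b)`, the wreath recursion read backwards; its image is the kernel of
the first-level action `parity`, so `|W_{n+1}| = 2 |W_n|²`. With `x = x_{n+1} = (x_n, 1) a_{n+1}`
one has `x² = (x_n, x_n)`, `v_i = (v_i, 1)` and `x (a, b) x⁻¹ = (x_n b x_n⁻¹, a)`. Hence the
generators of `M_{n+1}` lie in the group `B ∪ B x`, where `B` is the image of the pairs
`P = {(a, b) ∈ M_n × M_n | parity a = parity b}`. Conversely `B ≤ M_{n+1}`: the set `L` of `a`
with `(a, 1) ∈ M_{n+1}` contains `x_n²` and the `v_i` and is normalized by `M_n` (each `m ∈ M_n`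
is the first coordinate of an element of `M_{n+1}`), so `L ∪ L x_n ⊇ M_n`. Since `(L, 1) ⊆ B`,
`L` is even while `x_n` is odd, so `L` contains every even element of `M_n`; conjugating by `x`
puts `(1, L)` into `M_{n+1}` too. Thus `|M_{n+1}| = 2 |P| = |M_n|²`, and `|M_1| = 2` gives
`|M_n| = 2^(2^(n-1))`: the ratio of logarithms is `2^(n-1) / (2^n - 1) → 1/2`.
-/

namespace Subgroup

variable {Γ : Type*} [Group Γ]

theorem mem_or_mul_inv_mem_of_mem_closure_insert {N : Subgroup Γ} {x : Γ} {S : Set Γ}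
    (hS : S ⊆ N) (hx : x ^ 2 ∈ N) (hxN : ∀ h ∈ N, x * h * x⁻¹ ∈ N) {g : Γ}
    (hg : g ∈ closure (insert x S)) : g ∈ N ∨ g * x⁻¹ ∈ N := by
  rw [sq] at hx
  have hxN' : ∀ h ∈ N, x⁻¹ * h * x ∈ N := fun h hh => by
    have := N.mul_mem (N.mul_mem (N.inv_mem hx) (hxN h hh)) hx
    rwa [show (x * x)⁻¹ * (x * h * x⁻¹) * (x * x) = x⁻¹ * h * x by group] at this
  induction hg using closure_induction with
  | mem g hg =>
    rcases hg with rfl | hg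
    · exact .inr (by simp)
    · exact .inl (hS hg)
  | one => exact .inl N.one_mem
  | mul a b _ _ ha hb =>
    rcases ha with ha | ha <;> rcases hb with hb | hb
    · exact .inl (N.mul_mem ha hb)
    · exact .inr (by simpa [mul_assoc] using N.mul_mem ha hb)
    · refine .inr ?_
      simpa [mul_assoc] using N.mul_mem ha (hxN b hb)
    · refine .inl ?_
      simpa [mul_assoc] using N.mul_mem (N.mul_mem ha (hxN _ hb)) hx
  | inv a _ ha =>
    rcases ha with ha | ha
    · exact .inl (N.inv_mem ha)
    · refine .inr ?_
      simpa [mul_assoc] using N.mul_mem (hxN' _ (N.inv_mem ha)) (N.inv_mem hx)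

theorem card_eq_two_mul_card_inf_ker {Q : Type*} [Group Q] (χ : Γ →* Q) (hQ : Nat.card Q = 2)
    (H : Subgroup Γ) {g : Γ} (hg : g ∈ H) (hχ : χ g ≠ 1) :
    Nat.card H = 2 * Nat.card ↥(H ⊓ χ.ker) := by
  set ψ := χ.domRestrict H
  have hrange : Nat.card ψ.range = 2 := by
    have hdvd : Nat.card ψ.range ∣ 2 := hQ ▸ ψ.range.card_subgroup_dvd_card
    have hne : Nat.card ψ.range ≠ 1 := fun h1 =>
      hχ (by simpa [ψ] using (Subgroup.card_eq_one.mp h1).le ⟨⟨g, hg⟩, rfl⟩)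
    exact ((Nat.dvd_prime Nat.prime_two).mp hdvd).resolve_left hne
  have hker : Nat.card ψ.ker = Nat.card ↥(H ⊓ χ.ker) := by
    rw [MonoidHom.ker_domRestrict, ← inf_subgroupOf_left]
    exact Nat.card_congr (subgroupOfEquivOfLe inf_le_left).toEquiv
  rw [← ψ.ker.card_mul_index, index_ker, hrange, hker, mul_comm]

end Subgroup

theorem card_multiplicative_bool : Nat.card (Multiplicative Bool) = 2 := by simp

theorem Multiplicative.bool_sq (q : Multiplicative Bool) : q ^ 2 = 1 := by
  revert q
  decide

theorem Multiplicative.bool_eq_of_ne_one {p q : Multiplicative Bool} (hp : p ≠ 1) (hq : q ≠ 1) :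
    p = q := by
  revert p q
  decide

namespace TreeGroup

open Equiv

abbrev W (n : ℕ) := ↥(treeGroup n)

variable {n : ℕ}

theorem forall_lt_succ_eq_iff (m : ℕ) (i j : Leaf (n + 1)) :
    (∀ t : Fin (n + 1), (t : ℕ) < m + 1 → i t = j t) ↔
      i 0 = j 0 ∧ ∀ s : Fin n, (s : ℕ) < m → Fin.tail i s = Fin.tail j s := by
  refine ⟨fun h => ⟨h 0 m.succ_pos, fun s hs => h s.succ (by simpa using hs)⟩, ?_⟩
  rintro ⟨h0, hs⟩ t
  exact Fin.cases (fun _ => h0) (fun s ht => hs s (by simpa using ht)) t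

theorem apply_zero_eq_xor (σ : W (n + 1)) (ℓ : Leaf (n + 1)) :
    σ.1 ℓ 0 = xor (ℓ 0) (σ.1 default 0) := by
  have h := σ.2 1 ℓ default
  simp only [forall_lt_succ_eq_iff, Nat.not_lt_zero, false_imp_iff, implies_true, and_true] at h
  rcases h₁ : ℓ 0 <;> rcases h₂ : σ.1 ℓ 0 <;> rcases h₃ : σ.1 default 0 <;> simp_all

/-- The action on the two vertices of the first level, as an element of `ℤ/2 = (Bool, xor)`
(trivial on `W 0`, which has no first level). -/
def parity : (n : ℕ) → W n →* Multiplicative Bool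
  | 0 => 1
  | n + 1 =>
    { toFun σ := .ofAdd (σ.1 default 0)
      map_one' := rfl
      map_mul' σ τ := by
        change Multiplicative.ofAdd (σ.1 (τ.1 default) 0) = _
        rw [apply_zero_eq_xor σ, ← ofAdd_add, Bool.xor_comm]
        rfl }

theorem parity_succ_apply (σ : W (n + 1)) : parity (n + 1) σ = .ofAdd (σ.1 default 0) := rfl

theorem parity_succ_eq_one_iff (σ : W (n + 1)) : parity (n + 1) σ = 1 ↔ ∀ ℓ, σ.1 ℓ 0 = ℓ 0 := by
  rw [parity_succ_apply, ofAdd_eq_one]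
  refine ⟨fun h ℓ => by rw [apply_zero_eq_xor, h]; exact Bool.xor_false _, fun h => h default⟩

def branchPerm (a b : Perm (Leaf n)) : Perm (Leaf (n + 1)) where
  toFun ℓ := Fin.cons (ℓ 0) ((if ℓ 0 then b else a) (Fin.tail ℓ))
  invFun ℓ := Fin.cons (ℓ 0) ((if ℓ 0 then b⁻¹ else a⁻¹) (Fin.tail ℓ))
  left_inv ℓ := by induction ℓ using Fin.consCases with | cons c t => cases c <;> simp
  right_inv ℓ := by induction ℓ using Fin.consCases with | cons c t => cases c <;> simp

@[simp] theorem branchPerm_cons (a b : Perm (Leaf n)) (c : Bool) (t : Leaf n) :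
    branchPerm a b (Fin.cons c t) = Fin.cons c ((if c then b else a) t) := by
  simp [branchPerm]

theorem branchPerm_mem {a b : Perm (Leaf n)} (ha : a ∈ treeGroup n) (hb : b ∈ treeGroup n) :
    branchPerm a b ∈ treeGroup (n + 1) := by
  rintro (_ | m) i j
  · simp
  induction i using Fin.consCases with | cons c t => ?_
  induction j using Fin.consCases with | cons c' t' => ?_
  rw [branchPerm_cons, branchPerm_cons, forall_lt_succ_eq_iff, forall_lt_succ_eq_iff]
  simp only [Fin.cons_zero, Fin.tail_cons]
  rcases c <;> rcases c' <;> simp [ha m t t', hb m t t']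

/-- The element written `(a, b)` in the wreath recursion `W (n + 1) ≅ (W n × W n) ⋊ C₂`. -/
def branch : W n × W n →* W (n + 1) where
  toFun p := ⟨branchPerm p.1.1 p.2.1, branchPerm_mem p.1.2 p.2.2⟩
  map_one' := Subtype.ext <| Equiv.ext fun ℓ => by
    induction ℓ using Fin.consCases with | cons c t => cases c <;> simp
  map_mul' p q := Subtype.ext <| Equiv.ext fun ℓ => by
    induction ℓ using Fin.consCases with | cons c t => cases c <;> simp [Perm.mul_apply]

@[simp] theorem branch_apply_cons (p : W n × W n) (c : Bool) (t : Leaf n) :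
    (branch p).1 (Fin.cons c t) = Fin.cons c ((if c then p.2.1 else p.1.1) t) :=
  branchPerm_cons _ _ c t

theorem branch_injective : Function.Injective (branch (n := n)) := by
  rintro ⟨a, b⟩ ⟨a', b'⟩ h
  have h' (c : Bool) (t : Leaf n) :=
    congrArg (fun σ : W (n + 1) => Fin.tail (σ.1 (Fin.cons c t))) h
  simp only [branch_apply_cons, Fin.tail_cons] at h'
  simp only [Prod.mk.injEq]
  exact ⟨Subtype.ext (Equiv.ext (h' false)), Subtype.ext (Equiv.ext (h' true))⟩

theorem exists_apply_cons_eq (σ : W (n + 1)) (hσ : ∀ ℓ, σ.1 ℓ 0 = ℓ 0) (c : Bool) :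
    ∃ a : W n, ∀ t, σ.1 (Fin.cons c t) = Fin.cons c (a.1 t) := by
  have hcons (t : Leaf n) : σ.1 (Fin.cons c t) = Fin.cons c (Fin.tail (σ.1 (Fin.cons c t))) := by
    conv_lhs => rw [← Fin.cons_self_tail (σ.1 _), hσ, Fin.cons_zero]
  have hinj : Function.Injective fun t => Fin.tail (σ.1 (Fin.cons c t)) := fun t t' h => by
    have h' : σ.1 (Fin.cons c t) = σ.1 (Fin.cons c t') := by
      simp only at h
      rw [hcons t, h, ← hcons t']
    simpa using σ.1.injective h'
  refine ⟨⟨Equiv.ofBijective _ (Finite.injective_iff_bijective.mp hinj), fun m i j => ?_⟩, hcons⟩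
  have h := σ.2 (m + 1) (Fin.cons c i) (Fin.cons c j)
  rw [forall_lt_succ_eq_iff, forall_lt_succ_eq_iff] at h
  simpa [hσ] using h

theorem ker_parity_succ : (parity (n + 1)).ker = (branch (n := n)).range := by
  ext σ
  rw [MonoidHom.mem_ker, parity_succ_eq_one_iff]
  constructor
  · intro hσ
    obtain ⟨a, ha⟩ := exists_apply_cons_eq σ hσ false
    obtain ⟨b, hb⟩ := exists_apply_cons_eq σ hσ true
    refine ⟨(a, b), Subtype.ext (Equiv.ext fun ℓ => ?_)⟩
    induction ℓ using Fin.consCases with | cons c t => cases c <;> simp [ha, hb]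
  · rintro ⟨p, rfl⟩ ℓ
    induction ℓ using Fin.consCases with | cons c t => simp

theorem aEl_self_apply_cons (c : Bool) (t : Leaf n) :
    (aEl (n + 1) (n + 1)).1 (Fin.cons c t) = Fin.cons (!c) t := by
  funext s
  change aFun (n + 1) (n + 1) _ s = _
  induction s using Fin.cases <;> simp [aFun_apply]

theorem parity_aEl_self : parity (n + 1) (aEl (n + 1) (n + 1)) ≠ 1 := by
  rw [Ne, parity_succ_eq_one_iff, not_forall]
  exact ⟨Fin.cons false default, by simp [aEl_self_apply_cons]⟩

theorem card_treeGroup (n : ℕ) : Nat.card (W n) = 2 ^ (2 ^ n - 1) := by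
  induction n with
  | zero => exact Nat.card_of_subsingleton 1
  | succ n ih =>
    have h := Subgroup.card_eq_two_mul_card_inf_ker (parity (n + 1)) card_multiplicative_bool ⊤
      (Subgroup.mem_top _) parity_aEl_self
    rw [Subgroup.card_top, top_inf_eq, ker_parity_succ,
      ← Nat.card_congr (MonoidHom.ofInjective branch_injective).toEquiv, Nat.card_prod, ih] at h
    rw [h, ← pow_add, ← pow_succ', pow_succ 2 n]
    congr 1
    have : 1 ≤ 2 ^ n := Nat.one_le_two_pow
    omega

theorem aFun_succ_cons {k : ℕ} (hk : k ≤ n) (c : Bool) (t : Leaf n) :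
    aFun (n + 1) k (Fin.cons c t) = Fin.cons c (if c then t else aFun n k t) := by
  have hd : n + 1 - k = n - k + 1 := by omega
  funext s
  induction s using Fin.cases <;> cases c <;> simp [aFun_apply, hd, Fin.forall_fin_succ]

theorem aEl_succ_of_le {k : ℕ} (hk : k ≤ n) : aEl (n + 1) k = branch (aEl n k, 1) :=
  Subtype.ext <| Equiv.ext fun ℓ => by
    induction ℓ using Fin.consCases with
    | cons c t => cases c <;> simp [aEl, aPerm_apply, aFun_succ_cons hk]

theorem aEl_mul_self (N k : ℕ) : aEl N k * aEl N k = 1 :=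
  Subtype.ext <| Equiv.ext fun ℓ => aFun_involutive N k ℓ

theorem aEl_self_mul_branch_mul_aEl_self (p : W n × W n) :
    aEl (n + 1) (n + 1) * branch p * aEl (n + 1) (n + 1) = branch p.swap :=
  Subtype.ext <| Equiv.ext fun ℓ => by
    induction ℓ using Fin.consCases with
    | cons c t => cases c <;> simp [Perm.mul_apply, aEl_self_apply_cons]

theorem parity_branch (p : W n × W n) : parity (n + 1) (branch p) = 1 := by
  rw [← MonoidHom.mem_ker, ker_parity_succ]
  exact ⟨p, rfl⟩

theorem xEl_succ (N k : ℕ) : xEl N (k + 1) = xEl N k * aEl N (k + 1) := by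
  simp [xEl, List.range_succ]

theorem xEl_succ_of_le {k : ℕ} (hk : k ≤ n) : xEl (n + 1) k = branch (xEl n k, 1) := by
  induction k with
  | zero => exact (map_one branch).symm
  | succ k ih =>
    rw [xEl_succ, xEl_succ, ih (by omega), aEl_succ_of_le hk, ← map_mul, Prod.mk_mul_mk, mul_one]

theorem xEl_succ_self : xEl (n + 1) (n + 1) = branch (xEl n n, 1) * aEl (n + 1) (n + 1) := by
  rw [xEl_succ, xEl_succ_of_le le_rfl]

theorem vEl_succ_of_le {i : ℕ} (hi : i + 2 ≤ n) : vEl (n + 1) i = branch (vEl n i, 1) := by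
  rw [vEl, vEl, xEl_succ_of_le hi, ← map_pow, Prod.pow_mk, one_pow]

theorem xEl_succ_self_sq : xEl (n + 1) (n + 1) ^ 2 = branch (xEl n n, xEl n n) := by
  set s := aEl (n + 1) (n + 1) with hs_def
  calc xEl (n + 1) (n + 1) ^ 2 = branch (xEl n n, 1) * (s * branch (xEl n n, 1) * s) := by
        rw [sq, xEl_succ_self, ← hs_def]; group
    _ = branch (xEl n n, xEl n n) := by
        rw [aEl_self_mul_branch_mul_aEl_self, ← map_mul]; simp

theorem xEl_succ_self_conj (p : W n × W n) :
    xEl (n + 1) (n + 1) * branch p * (xEl (n + 1) (n + 1))⁻¹ =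
      branch (xEl n n * p.2 * (xEl n n)⁻¹, p.1) := by
  set s := aEl (n + 1) (n + 1) with hs_def
  have hs : s⁻¹ = s := inv_eq_of_mul_eq_one_right (aEl_mul_self _ _)
  calc xEl (n + 1) (n + 1) * branch p * (xEl (n + 1) (n + 1))⁻¹
      = branch (xEl n n, 1) * (s * branch p * s) * (branch (xEl n n, 1))⁻¹ := by
        rw [xEl_succ_self, ← hs_def, mul_inv_rev, hs]; group
    _ = branch (xEl n n * p.2 * (xEl n n)⁻¹, p.1) := by
        rw [aEl_self_mul_branch_mul_aEl_self, ← map_inv, ← map_mul, ← map_mul]; simp [Prod.swap]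

theorem parity_xEl_self_ne_one (hn : 1 ≤ n) : parity n (xEl n n) ≠ 1 := by
  obtain ⟨m, rfl⟩ := Nat.exists_eq_add_of_le' hn
  rw [xEl_succ_self, map_mul, parity_branch, one_mul]
  exact parity_aEl_self

theorem parity_vEl (i : ℕ) : parity n (vEl n i) = 1 := by
  rw [vEl, map_pow, Multiplicative.bool_sq]

abbrev M (n : ℕ) : Subgroup (W n) := MgrpK n n

theorem xEl_mem_M (n : ℕ) : xEl n n ∈ M n :=
  Subgroup.subset_closure (Set.mem_insert _ _)

theorem vEl_mem_M {i : ℕ} (hi : i + 3 ≤ n) : vEl n i ∈ M n :=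
  Subgroup.subset_closure (Set.mem_insert_of_mem _ ⟨i, hi, rfl⟩)

theorem vEl_mem_M_of_le {i : ℕ} (hi : i + 2 ≤ n) : vEl n i ∈ M n := by
  rcases Nat.lt_or_ge (i + 2) n with h | h
  · exact vEl_mem_M h
  · obtain rfl : n = i + 2 := by omega
    exact pow_mem (xEl_mem_M _) 2

theorem xEl_sq_mem_MgrpK_succ (N k : ℕ) : xEl N k ^ 2 ∈ MgrpK N (k + 1) := by
  match k with
  | 0 => simp [xEl]
  | 1 =>
    rw [xEl_succ, show xEl N 0 = 1 from rfl, one_mul, sq, aEl_mul_self]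
    exact one_mem _
  | k + 2 => exact Subgroup.subset_closure (Set.mem_insert_of_mem _ ⟨k, le_rfl, rfl⟩)

def evenPairs (n : ℕ) : Subgroup (W n × W n) :=
  (M n).prod (M n) ⊓ ((parity n).coprod (parity n)⁻¹).ker

theorem mem_evenPairs {p : W n × W n} :
    p ∈ evenPairs n ↔ p.1 ∈ M n ∧ p.2 ∈ M n ∧ parity n p.1 = parity n p.2 := by
  simp [evenPairs, Subgroup.mem_prod, mul_inv_eq_one, and_assoc]

theorem card_evenPairs (hn : 1 ≤ n) : Nat.card (M n) ^ 2 = 2 * Nat.card (evenPairs n) := by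
  have h := Subgroup.card_eq_two_mul_card_inf_ker ((parity n).coprod (parity n)⁻¹)
    card_multiplicative_bool ((M n).prod (M n)) (g := (xEl n n, 1)) ⟨xEl_mem_M n, one_mem _⟩
    (by simpa using parity_xEl_self_ne_one hn)
  rwa [Nat.card_congr ((M n).prodEquiv (M n)).toEquiv, Nat.card_prod, ← sq] at h

theorem mem_map_evenPairs_or_mul_inv_mem {g : W (n + 1)} (hg : g ∈ M (n + 1)) :
    g ∈ (evenPairs n).map branch ∨ g * (xEl (n + 1) (n + 1))⁻¹ ∈ (evenPairs n).map branch := by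
  refine Subgroup.mem_or_mul_inv_mem_of_mem_closure_insert ?_ ?_ ?_ hg
  · rintro _ ⟨i, hi, rfl⟩
    rw [vEl_succ_of_le (by omega)]
    exact ⟨_, mem_evenPairs.mpr ⟨vEl_mem_M_of_le (by omega), one_mem _, by simp [parity_vEl]⟩,
      rfl⟩
  · rw [xEl_succ_self_sq]
    exact ⟨_, mem_evenPairs.mpr ⟨xEl_mem_M n, xEl_mem_M n, rfl⟩, rfl⟩
  · rintro _ ⟨p, hp, rfl⟩
    obtain ⟨hp₁, hp₂, hpar⟩ := mem_evenPairs.mp hp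
    rw [xEl_succ_self_conj]
    refine ⟨_, mem_evenPairs.mpr ⟨?_, hp₁, by simp [hpar]⟩, rfl⟩
    exact mul_mem (mul_mem (xEl_mem_M n) hp₂) (inv_mem (xEl_mem_M n))

theorem comap_branch_M_le_evenPairs : (M (n + 1)).comap branch ≤ evenPairs n := by
  intro p hp
  rcases mem_map_evenPairs_or_mul_inv_mem hp with ⟨q, hq, hqp⟩ | ⟨q, -, hqp⟩
  · rwa [← branch_injective hqp]
  · have h := congrArg (parity (n + 1)) hqp
    rw [parity_branch, map_mul, parity_branch, one_mul, map_inv, eq_comm, inv_eq_one] at h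
    exact absurd h (parity_xEl_self_ne_one (by omega))

/-- The rigid stabilizer of the left subtree in `M (n + 1)`, read in `W n`. -/
def leftRist (n : ℕ) : Subgroup (W n) :=
  (M (n + 1)).comap (branch.comp (MonoidHom.inl (W n) (W n)))

theorem mem_leftRist {a : W n} : a ∈ leftRist n ↔ branch (a, 1) ∈ M (n + 1) := Iff.rfl

theorem exists_branch_mem_M {m : W n} (hm : m ∈ M n) : ∃ b, branch (m, b) ∈ M (n + 1) := by
  have h : M n ≤ ((M (n + 1)).comap branch).map (MonoidHom.fst (W n) (W n)) := by
    refine Subgroup.closure_le _ |>.mpr ?_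
    rintro _ (rfl | ⟨i, hi, rfl⟩)
    · refine ⟨(xEl n n, xEl n n), ?_, rfl⟩
      rw [SetLike.mem_coe, Subgroup.mem_comap, ← xEl_succ_self_sq]
      exact pow_mem (xEl_mem_M _) 2
    · refine ⟨(vEl n i, 1), ?_, rfl⟩
      rw [SetLike.mem_coe, Subgroup.mem_comap, ← vEl_succ_of_le (by omega)]
      exact vEl_mem_M (by omega)
  obtain ⟨⟨a, b⟩, hab, rfl⟩ := h hm
  exact ⟨b, hab⟩

theorem conj_mem_leftRist {m a : W n} (hm : m ∈ M n) (ha : a ∈ leftRist n) :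
    m * a * m⁻¹ ∈ leftRist n := by
  rw [mem_leftRist] at ha ⊢
  obtain ⟨b, hb⟩ := exists_branch_mem_M hm
  have h := mul_mem (mul_mem hb ha) (inv_mem hb)
  rw [← map_inv, ← map_mul, ← map_mul] at h
  simpa using h

theorem parity_eq_one_of_mem_leftRist {a : W n} (ha : a ∈ leftRist n) : parity n a = 1 := by
  simpa using (mem_evenPairs.mp (comap_branch_M_le_evenPairs ha)).2.2

theorem mem_leftRist_of_parity_eq_one (hn : 1 ≤ n) {m : W n} (hm : m ∈ M n)
    (hpar : parity n m = 1) : m ∈ leftRist n := by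
  have hx : xEl n n ^ 2 ∈ leftRist n := by
    have h : branch (xEl n n ^ 2, 1) = xEl (n + 1) n ^ 2 := by
      rw [xEl_succ_of_le le_rfl, ← map_pow, Prod.pow_mk, one_pow]
    rw [mem_leftRist, h]
    exact xEl_sq_mem_MgrpK_succ _ _
  have hV : VsetK n n ⊆ leftRist n := by
    rintro _ ⟨i, hi, rfl⟩
    rw [SetLike.mem_coe, mem_leftRist, ← vEl_succ_of_le (by omega)]
    exact vEl_mem_M (by omega)
  refine (Subgroup.mem_or_mul_inv_mem_of_mem_closure_insert hV hx
    (fun a ha => conj_mem_leftRist (xEl_mem_M n) ha) hm).resolve_right fun h => ?_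
  have h' := parity_eq_one_of_mem_leftRist h
  rw [map_mul, hpar, one_mul, map_inv, inv_eq_one] at h'
  exact parity_xEl_self_ne_one hn h'

theorem branch_one_mem_M {a : W n} (ha : a ∈ leftRist n) : branch (1, a) ∈ M (n + 1) := by
  rw [mem_leftRist] at ha
  have h := mul_mem (mul_mem (xEl_mem_M (n + 1)) ha) (inv_mem (xEl_mem_M (n + 1)))
  rwa [xEl_succ_self_conj, mul_one, mul_inv_cancel] at h

theorem evenPairs_le_comap_branch_M (hn : 1 ≤ n) : evenPairs n ≤ (M (n + 1)).comap branch := by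
  rintro ⟨a, b⟩ hab
  obtain ⟨ha, hb, hpar⟩ := mem_evenPairs.mp hab
  rw [Subgroup.mem_comap]
  by_cases h : parity n a = 1
  · have ha' := mem_leftRist.mp (mem_leftRist_of_parity_eq_one hn ha h)
    have hb' := branch_one_mem_M (mem_leftRist_of_parity_eq_one hn hb (hpar ▸ h))
    simpa [← map_mul] using mul_mem ha' hb'
  · -- `(a, b) = (a x⁻¹, 1) (1, b x⁻¹) (x, x)` with `x = x_n`, and `a x⁻¹`, `b x⁻¹` are even
    have hx : parity n (xEl n n) = parity n a :=
      Multiplicative.bool_eq_of_ne_one (parity_xEl_self_ne_one hn) h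
    have ha' := mem_leftRist.mp <| mem_leftRist_of_parity_eq_one hn
      (mul_mem ha (inv_mem (xEl_mem_M n))) (by rw [map_mul, map_inv, hx, mul_inv_cancel])
    have hb' := branch_one_mem_M <| mem_leftRist_of_parity_eq_one hn
      (mul_mem hb (inv_mem (xEl_mem_M n))) (by rw [map_mul, map_inv, hx, hpar, mul_inv_cancel])
    have h := mul_mem (mul_mem ha' hb') (pow_mem (xEl_mem_M (n + 1)) 2)
    rw [xEl_succ_self_sq, ← map_mul, ← map_mul] at h
    simpa using h

theorem M_succ_inf_ker_parity (hn : 1 ≤ n) :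
    M (n + 1) ⊓ (parity (n + 1)).ker = (evenPairs n).map branch := by
  rw [ker_parity_succ, inf_comm, ← Subgroup.map_comap_eq,
    le_antisymm comap_branch_M_le_evenPairs (evenPairs_le_comap_branch_M hn)]

theorem card_M_succ (hn : 1 ≤ n) : Nat.card (M (n + 1)) = Nat.card (M n) ^ 2 := by
  rw [Subgroup.card_eq_two_mul_card_inf_ker (parity (n + 1)) card_multiplicative_bool
    (M (n + 1)) (xEl_mem_M _) (parity_xEl_self_ne_one (by omega)), M_succ_inf_ker_parity hn,
    card_evenPairs hn, ← Nat.card_congr (Subgroup.equivMapOfInjective _ _ branch_injective).toEquiv]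

theorem card_M_one : Nat.card (M 1) = 2 := by
  have hbot : M 1 ⊓ (parity 1).ker = ⊥ := by
    rw [Subgroup.eq_bot_iff_forall]
    rintro σ ⟨-, hσ⟩
    obtain ⟨p, rfl⟩ := ker_parity_succ (n := 0) ▸ hσ
    rw [Subsingleton.elim p 1, map_one]
  rw [Subgroup.card_eq_two_mul_card_inf_ker (parity 1) card_multiplicative_bool (M 1)
    (xEl_mem_M 1) (parity_xEl_self_ne_one le_rfl), hbot, Subgroup.card_bot]

theorem card_M (hn : 1 ≤ n) : Nat.card (M n) = 2 ^ 2 ^ (n - 1) := by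
  induction n, hn using Nat.le_induction with
  | base => exact card_M_one
  | succ n hn ih =>
    rw [card_M_succ hn, ih, ← pow_mul, ← pow_succ, Nat.sub_add_cancel hn, Nat.add_sub_cancel]

end TreeGroup

open Filter Topology in
theorem tendsto_two_pow_div_two_pow_succ_sub_one :
    Tendsto (fun n : ℕ => (2 : ℝ) ^ n / (2 ^ (n + 1) - 1)) atTop (𝓝 (1 / 2)) := by
  have h : Tendsto (fun n : ℕ => 1 / (2 - (1 / 2 : ℝ) ^ n)) atTop (𝓝 (1 / (2 - 0))) :=
    tendsto_const_nhds.div (tendsto_const_nhds.sub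
      (tendsto_pow_atTop_nhds_zero_of_lt_one (by norm_num) (by norm_num))) (by norm_num)
  refine (by norm_num : (1 : ℝ) / (2 - 0) = 1 / 2) ▸ h.congr fun n => ?_
  rw [pow_succ, div_pow, one_pow]
  field_simp

/-- the inverse limit of the groups `M_n = ⟨x_n, v_{n-3}, …, v_0⟩` has
Hausdorff dimension `1/2` in `Aut(T)`, i.e. `lim_n log₂|M_n| / log₂|W_n| = 1/2`. -/
theorem hausdorffDim_M :
    Filter.Tendsto
      (fun n : ℕ =>
        Real.logb 2 (Nat.card ↥(MgrpK n n)) / Real.logb 2 (Nat.card ↥(treeGroup n)))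
      Filter.atTop (nhds (1 / 2)) := by
  rw [← Filter.tendsto_add_atTop_iff_nat 1]
  refine tendsto_two_pow_div_two_pow_succ_sub_one.congr fun n => ?_
  rw [TreeGroup.card_M (by omega : 1 ≤ n + 1), TreeGroup.card_treeGroup, Nat.add_sub_cancel,
    Nat.cast_pow, Nat.cast_pow, Nat.cast_ofNat, Real.logb_pow, Real.logb_pow,
    Real.logb_self_eq_one one_lt_two, Nat.cast_sub Nat.one_le_two_pow]
  push_cast
  ring
end
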